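/- arXiv:1811.04004 — 7 statements merged into one kernel-verified Lean document; each statement's English description precedes it below -/
import Mathlib

section
/- Let P_0, P_1 be real symmetric positive definite d×d matrices, P(s) = s P_0 + (1−s) P_1, and let n_1,…,n_{2k} ∈ {1,…,d}. Then for every s ∈ (0,1), (d/ds)[ ΣΠ_{(n_1,…,n_{2k})}(P(s)^{−1}) / √(det P(s)) ] = −(1/2) Σ_{m,l=1}^d ΣΠ_{(n_1,…,n_{2k},m,l)}(P(s)^{−1}) · (P_0 − P_1)_{ml} / √(det P(s)). -/
open MeasureTheory

/-- Sum over all pairings of `{0, …, m−1}` (encoded as fixed-point-free involutions)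
of the product over blocks `{i, σ i}` (with `i < σ i`) of the entries `M (nv i) (nv (σ i))`. -/
noncomputable def sumPairings {d m : ℕ} (nv : Fin m → Fin d)
    (M : Matrix (Fin d) (Fin d) ℝ) : ℝ :=
  ∑ σ : Equiv.Perm (Fin m),
    if (∀ i, σ (σ i) = i) ∧ (∀ i, σ i ≠ i) then
      ∏ i ∈ Finset.univ.filter fun i => i < σ i, M (nv i) (nv (σ i))
    else 0

/-!
Pairings of `n + 2` points split according to the partner of the last point: either the two new
points form a block, or they sit at the two ends of a block `{i, σ i}` of a pairing `σ` of the first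
`n` points. Contracting the two new indices against a symmetric `Q`, the first kind gives
`ΣΠ(A) · tr(A Q)`, and the second kind gives twice (once per orientation of the block) the
product-rule derivative of `ΣΠ(A)` in the direction `A Q A`. For `A = P(s)⁻¹` we have
`A' = -A (P₀ - P₁) A` and `(det P)' = det P · tr(A (P₀ - P₁))`, so the quotient rule gives the
claim.
-/

open Finset Equiv

namespace Equiv.Perm

variable {ι : Type*}

abbrev IsPairing (σ : Perm ι) : Prop :=
  (∀ i, σ (σ i) = i) ∧ ∀ i, σ i ≠ i

theorem IsPairing.conj {σ c : Perm ι} (hσ : σ.IsPairing) (hc : ∀ x, c (c x) = x) :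
    (c * σ * c).IsPairing := by
  refine ⟨fun x => by simp only [mul_apply, hc, hσ.1], fun x h => hσ.2 (c x) ?_⟩
  simpa only [mul_apply, hc] using congrArg c h

/-- Each block `{i, σ i}` is visited once from each end. -/
theorem IsPairing.sum_eq_two_mul_sum_filter_lt [Fintype ι] [LinearOrder ι] {R : Type*}
    [NonAssocSemiring R] {σ : Perm ι} (hσ : σ.IsPairing) {t : ι → R}
    (ht : ∀ i, t (σ i) = t i) :
    ∑ i, t i = 2 * ∑ i ∈ univ.filter (fun i => i < σ i), t i := by
  have hflip : ∑ i ∈ univ.filter (fun i => ¬ i < σ i), t i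
      = ∑ i ∈ univ.filter (fun i => i < σ i), t i := by
    refine sum_nbij' σ σ (fun a ha => ?_) (fun b hb => ?_) (fun a _ => hσ.1 a)
      (fun b _ => hσ.1 b) (fun a _ => (ht a).symm)
    · simp only [mem_filter, mem_univ, true_and, hσ.1] at ha ⊢
      exact lt_of_le_of_ne (not_lt.1 ha) (hσ.2 a)
    · simp only [mem_filter, mem_univ, true_and, hσ.1] at hb ⊢
      exact not_lt.2 hb.le
  rw [two_mul, ← sum_filter_add_sum_filter_not univ (fun i => i < σ i) t, hflip]

def blockProd [Fintype ι] [LinearOrder ι] {R : Type*} [CommMonoid R] (σ : Perm ι)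
    (f : ι → ι → R) : R :=
  ∏ i ∈ univ.filter (fun i => i < σ i), f i (σ i)

theorem IsPairing.sum_prod_erase_erase_mul [Fintype ι] [LinearOrder ι] {R : Type*}
    [CommSemiring R] {σ : Perm ι} (hσ : σ.IsPairing) (f g : ι → ι → R)
    (hg : ∀ i j, g i j = g j i) :
    ∑ i, (∏ j ∈ ((univ.filter fun j => j < σ j).erase i).erase (σ i), f j (σ j)) * g i (σ i)
      = 2 * ∑ i ∈ univ.filter (fun i => i < σ i),
          (∏ j ∈ (univ.filter fun j => j < σ j).erase i, f j (σ j)) * g i (σ i) := by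
  rw [hσ.sum_eq_two_mul_sum_filter_lt fun i => by rw [hσ.1, hg, erase_right_comm]]
  refine congrArg _ (sum_congr rfl fun i hi => ?_)
  rw [erase_eq_of_notMem]
  simp only [mem_erase, mem_filter, mem_univ, true_and, hσ.1] at hi ⊢
  exact fun h => hi.not_gt h.2

end Equiv.Perm

namespace Pairing

variable {n : ℕ}

def old (i : Fin n) : Fin (n + 2) := finSumFinEquiv (Sum.inl i)
def penult : Fin (n + 2) := finSumFinEquiv (Sum.inr 0)
def ult : Fin (n + 2) := finSumFinEquiv (Sum.inr 1)

@[simp] theorem val_old (i : Fin n) : (old i).val = i.val := rfl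
@[simp] theorem val_penult : (penult : Fin (n + 2)).val = n := by simp [penult]
@[simp] theorem val_ult : (ult : Fin (n + 2)).val = n + 1 := by simp [ult]

theorem old_injective : Function.Injective (old (n := n)) := fun i j h =>
  Fin.ext (by simpa using congrArg Fin.val h)

theorem old_ne_penult (i : Fin n) : old i ≠ penult := by
  simp [Fin.ext_iff, i.2.ne]

theorem old_ne_ult (i : Fin n) : old i ≠ ult := by
  simp only [ne_eq, Fin.ext_iff, val_old, val_ult]; omega

theorem penult_ne_ult : (penult : Fin (n + 2)) ≠ ult := by
  simp [Fin.ext_iff]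

theorem old_lt_penult (i : Fin n) : old i < penult := by
  simpa only [Fin.lt_def, val_old, val_penult] using i.2

theorem old_lt_ult (i : Fin n) : old i < ult := by
  simp only [Fin.lt_def, val_old, val_ult]; omega

theorem penult_lt_ult : (penult : Fin (n + 2)) < ult := by
  simp [Fin.lt_def]

theorem old_lt_old {i j : Fin n} : old i < old j ↔ i < j := by
  rw [Fin.lt_def, val_old, val_old, ← Fin.lt_def]

theorem old_or_penult_or_ult (x : Fin (n + 2)) : (∃ i, x = old i) ∨ x = penult ∨ x = ult := by
  obtain ⟨y, rfl⟩ := finSumFinEquiv.surjective x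
  rcases y with i | j
  · exact Or.inl ⟨i, rfl⟩
  · fin_cases j
    exacts [Or.inr (Or.inl rfl), Or.inr (Or.inr rfl)]

theorem snoc_snoc_old {α : Type*} (f : Fin n → α) (a b : α) (i : Fin n) :
    (Fin.snoc (Fin.snoc f a) b : Fin (n + 1 + 1) → α) (old i) = f i := by
  rw [show old i = (i.castSucc).castSucc from Fin.ext rfl, Fin.snoc_castSucc, Fin.snoc_castSucc]

theorem snoc_snoc_penult {α : Type*} (f : Fin n → α) (a b : α) :
    (Fin.snoc (Fin.snoc f a) b : Fin (n + 1 + 1) → α) penult = a := by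
  rw [show penult = (Fin.last n).castSucc from Fin.ext (by simp), Fin.snoc_castSucc,
    Fin.snoc_last]

theorem snoc_snoc_ult {α : Type*} (f : Fin n → α) (a b : α) :
    (Fin.snoc (Fin.snoc f a) b : Fin (n + 1 + 1) → α) ult = b := by
  rw [show ult = Fin.last (n + 1) from Fin.ext (by simp), Fin.snoc_last]

theorem prod_univ_eq_prod_old_mul {M : Type*} [CommMonoid M] (g : Fin (n + 2) → M) :
    ∏ x, g x = (∏ i, g (old i)) * (g penult * g ult) := by
  rw [← Equiv.prod_comp finSumFinEquiv g, Fintype.prod_sum_type, Fin.prod_univ_two]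
  rfl

/-- `σ` together with the new block `{n, n + 1}`. -/
def addBlock (σ : Perm (Fin n)) : Perm (Fin (n + 2)) :=
  finSumFinEquiv.permCongr (σ.sumCongr (swap 0 1))

@[simp] theorem addBlock_old (σ : Perm (Fin n)) (i : Fin n) : addBlock σ (old i) = old (σ i) := by
  simp [addBlock, old]

@[simp] theorem addBlock_penult (σ : Perm (Fin n)) : addBlock σ penult = ult := by
  simp [addBlock, penult, ult]

@[simp] theorem addBlock_ult (σ : Perm (Fin n)) : addBlock σ ult = penult := by
  simp [addBlock, penult, ult, swap_apply_right]

theorem isPairing_addBlock {σ : Perm (Fin n)} (hσ : σ.IsPairing) : (addBlock σ).IsPairing := by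
  refine ⟨fun x => ?_, fun x => ?_⟩ <;>
    rcases old_or_penult_or_ult x with ⟨i, rfl⟩ | rfl | rfl
  all_goals simp only [addBlock_old, addBlock_penult, addBlock_ult, hσ.1]
  · exact fun h => hσ.2 i (old_injective h)
  · exact penult_ne_ult.symm
  · exact penult_ne_ult

theorem addBlock_injective : Function.Injective (addBlock (n := n)) := fun σ σ' h =>
  Perm.ext fun i => old_injective (by simpa using congrArg (· (old i)) h)

theorem exists_addBlock_eq {τ : Perm (Fin (n + 2))} (hτ : τ.IsPairing) (hult : τ ult = penult) :
    ∃ σ : Perm (Fin n), σ.IsPairing ∧ addBlock σ = τ := by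
  have hpenult : τ penult = ult := by rw [← hult, hτ.1]
  have hold : ∀ i, ∃ j, τ (old i) = old j := fun i => by
    rcases old_or_penult_or_ult (τ (old i)) with h | h | h
    · exact h
    · exact absurd (by rw [← hτ.1 (old i), h, hpenult]) (old_ne_ult i)
    · exact absurd (by rw [← hτ.1 (old i), h, hult]) (old_ne_penult i)
  choose f hf using hold
  have hff : ∀ i, f (f i) = i := fun i => old_injective (by rw [← hf, ← hf, hτ.1])
  refine ⟨⟨f, f, hff, hff⟩, ⟨hff, fun i h => hτ.2 (old i) ?_⟩, Perm.ext fun x => ?_⟩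
  · exact (hf i).trans (congrArg old h)
  · rcases old_or_penult_or_ult x with ⟨i, rfl⟩ | rfl | rfl
    · simp [hf]
    · simp [hpenult]
    · simp [hult]

/-- The block `{i, σ i}` of `σ` split into the blocks `{i, n}` and `{σ i, n + 1}`. -/
def splitBlock (σ : Perm (Fin n)) (i : Fin n) : Perm (Fin (n + 2)) :=
  swap (old i) ult * addBlock σ * swap (old i) ult

theorem splitBlock_apply (σ : Perm (Fin n)) (i : Fin n) (x : Fin (n + 2)) :
    splitBlock σ i x = swap (old i) ult (addBlock σ (swap (old i) ult x)) := rfl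

theorem isPairing_splitBlock {σ : Perm (Fin n)} (hσ : σ.IsPairing) (i : Fin n) :
    (splitBlock σ i).IsPairing :=
  (isPairing_addBlock hσ).conj (swap_apply_self _ _)

theorem splitBlock_old_of_ne {σ : Perm (Fin n)} (hσ : σ.IsPairing) {i j : Fin n}
    (hi : j ≠ i) (hσi : j ≠ σ i) : splitBlock σ i (old j) = old (σ j) := by
  rw [splitBlock_apply, swap_apply_of_ne_of_ne (old_injective.ne hi) (old_ne_ult j),
    addBlock_old]
  refine swap_apply_of_ne_of_ne (old_injective.ne fun h => hσi ?_) (old_ne_ult _)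
  rw [← h, hσ.1]

theorem splitBlock_old_self (σ : Perm (Fin n)) (i : Fin n) : splitBlock σ i (old i) = penult := by
  rw [splitBlock_apply, swap_apply_left, addBlock_ult]
  exact swap_apply_of_ne_of_ne (old_ne_penult i).symm penult_ne_ult

theorem splitBlock_old_apply {σ : Perm (Fin n)} (hσ : σ.IsPairing) (i : Fin n) :
    splitBlock σ i (old (σ i)) = ult := by
  rw [splitBlock_apply, swap_apply_of_ne_of_ne (old_injective.ne (hσ.2 i)) (old_ne_ult _),
    addBlock_old, hσ.1, swap_apply_left]

theorem splitBlock_penult (σ : Perm (Fin n)) (i : Fin n) : splitBlock σ i penult = old i := by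
  rw [splitBlock_apply, swap_apply_of_ne_of_ne (old_ne_penult i).symm penult_ne_ult,
    addBlock_penult, swap_apply_right]

theorem splitBlock_ult {σ : Perm (Fin n)} (hσ : σ.IsPairing) (i : Fin n) :
    splitBlock σ i ult = old (σ i) := by
  rw [splitBlock_apply, swap_apply_right, addBlock_old]
  exact swap_apply_of_ne_of_ne (old_injective.ne (hσ.2 i)) (old_ne_ult _)

theorem splitBlock_injective :
    Function.Injective fun p : Perm (Fin n) × Fin n => splitBlock p.1 p.2 := by
  rintro ⟨σ, i⟩ ⟨σ', i'⟩ h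
  obtain rfl : i = i' := old_injective (by
    simpa only [splitBlock_penult] using congrArg (· penult) h)
  simp only [splitBlock, mul_assoc, mul_right_cancel_iff, mul_left_cancel_iff] at h
  rw [addBlock_injective h]

theorem exists_splitBlock_eq {τ : Perm (Fin (n + 2))} (hτ : τ.IsPairing)
    (hult : τ ult ≠ penult) : ∃ σ : Perm (Fin n), σ.IsPairing ∧ ∃ i, splitBlock σ i = τ := by
  have hpenult : τ penult ≠ ult := fun h => hult (by rw [← h, hτ.1])
  obtain ⟨i, hi⟩ : ∃ i, τ penult = old i := by
    rcases old_or_penult_or_ult (τ penult) with h | h | h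
    exacts [h, absurd h (hτ.2 penult), absurd h hpenult]
  set c := swap (old i) ult
  have hc : ∀ x, c (c x) = x := swap_apply_self _ _
  have hcτc : (c * τ * c) ult = penult := by
    have hτi : τ (old i) = penult := by rw [← hi, hτ.1]
    simp only [c, Perm.mul_apply, swap_apply_right, hτi]
    exact swap_apply_of_ne_of_ne (old_ne_penult i).symm penult_ne_ult
  obtain ⟨σ, hσ, hστ⟩ := exists_addBlock_eq (hτ.conj hc) hcτc
  refine ⟨σ, hσ, i, Perm.ext fun x => ?_⟩
  simp [splitBlock_apply, hστ, c, hc]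

/-- In a pairing of `n + 2` points, `n + 1` is paired either with `n` or with a point `< n`. -/
theorem sum_filter_isPairing_add_two {M : Type*} [AddCommMonoid M] (G : Perm (Fin (n + 2)) → M) :
    ∑ τ ∈ univ.filter Perm.IsPairing, G τ
      = ∑ σ ∈ univ.filter Perm.IsPairing, (G (addBlock σ) + ∑ i, G (splitBlock σ i)) := by
  rw [sum_add_distrib, ← sum_filter_add_sum_filter_not _ (fun τ => τ ult = penult)]
  congr 1
  · symm
    refine sum_bij (fun σ _ => addBlock σ) (fun σ hσ => ?_)
      (fun σ _ σ' _ h => addBlock_injective h) (fun τ hτ => ?_) (fun _ _ => rfl)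
    · simp only [mem_filter, mem_univ, true_and] at hσ ⊢
      exact ⟨isPairing_addBlock hσ, addBlock_ult σ⟩
    · simp only [mem_filter, mem_univ, true_and] at hτ ⊢
      obtain ⟨σ, hσ, rfl⟩ := exists_addBlock_eq hτ.1 hτ.2
      exact ⟨σ, hσ, rfl⟩
  · rw [← sum_product']
    symm
    refine sum_bij (fun p _ => splitBlock p.1 p.2) (fun p hp => ?_)
      (fun p _ p' _ h => splitBlock_injective h) (fun τ hτ => ?_) (fun _ _ => rfl)
    · simp only [mem_product, mem_filter, mem_univ, true_and, and_true] at hp ⊢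
      exact ⟨isPairing_splitBlock hp p.2, by rw [splitBlock_ult hp]; exact old_ne_penult _⟩
    · simp only [mem_product, mem_filter, mem_univ, true_and, and_true] at hτ ⊢
      obtain ⟨σ, hσ, i, rfl⟩ := exists_splitBlock_eq hτ.1 hτ.2
      exact ⟨(σ, i), hσ, rfl⟩

theorem blockProd_addBlock {R : Type*} [CommMonoid R] (σ : Perm (Fin n))
    (F : Fin (n + 2) → Fin (n + 2) → R) :
    (addBlock σ).blockProd F = σ.blockProd (fun i j => F (old i) (old j)) * F penult ult := by
  rw [Perm.blockProd, Perm.blockProd, prod_filter, prod_univ_eq_prod_old_mul, prod_filter,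
    addBlock_penult, addBlock_ult, if_pos penult_lt_ult, if_neg penult_lt_ult.not_gt, mul_one]
  simp only [addBlock_old, old_lt_old]

theorem blockProd_splitBlock {R : Type*} [CommMonoid R] {σ : Perm (Fin n)}
    (hσ : σ.IsPairing) (i : Fin n) (F : Fin (n + 2) → Fin (n + 2) → R) :
    (splitBlock σ i).blockProd F = F (old i) penult * F (old (σ i)) ult *
          ∏ j ∈ ((univ.filter fun j => j < σ j).erase i).erase (σ i), F (old j) (old (σ j)) := by
  have hold : ∀ j,
      (if old j < splitBlock σ i (old j) then F (old j) (splitBlock σ i (old j)) else 1) = if j = i then F (old i) penult else if j = σ i then F (old (σ i)) ult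
        else if j < σ j then F (old j) (old (σ j)) else 1 := by
    intro j
    by_cases hi : j = i
    · subst hi
      rw [splitBlock_old_self, if_pos (old_lt_penult j), if_pos rfl]
    by_cases hσi : j = σ i
    · subst hσi
      rw [splitBlock_old_apply hσ, if_pos (old_lt_ult _), if_neg hi, if_pos rfl]
    · rw [splitBlock_old_of_ne hσ hi hσi, if_neg hi, if_neg hσi]
      simp only [old_lt_old]
  rw [Perm.blockProd, prod_filter, prod_univ_eq_prod_old_mul, splitBlock_penult, splitBlock_ult hσ,
    if_neg (old_lt_penult i).not_gt, if_neg (old_lt_ult _).not_gt, mul_one, mul_one,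
    prod_congr rfl fun j _ => hold j, ← mul_prod_erase univ _ (mem_univ i),
    ← mul_prod_erase _ _ (mem_erase.2 ⟨hσ.2 i, mem_univ (σ i)⟩), if_pos rfl, if_neg (hσ.2 i),
    if_pos rfl, ← mul_assoc]
  congr 1
  rw [← filter_erase, ← filter_erase, prod_filter]
  refine prod_congr rfl fun j hj => ?_
  obtain ⟨hσi, hi, -⟩ := by simpa only [mem_erase] using hj
  rw [if_neg hi, if_neg hσi]

end Pairing

namespace Matrix

variable {n R : Type*} [Fintype n] [CommSemiring R] {M Q : Matrix n n R}

theorem IsSymm.mul_mul_self (hM : M.IsSymm) (hQ : Q.IsSymm) : (M * Q * M).IsSymm := by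
  simp only [IsSymm, transpose_mul, hM.eq, hQ.eq, Matrix.mul_assoc]

theorem sum_sum_mul_eq_trace_mul (hQ : Q.IsSymm) : ∑ m, ∑ l, M m l * Q m l = (M * Q).trace := by
  simp only [trace, diag, mul_apply, hQ.apply]

theorem sum_sum_mul_mul_eq_mul_mul_apply (hM : M.IsSymm) (a b : n) :
    ∑ m, ∑ l, M a m * M b l * Q m l = (M * Q * M) a b := by
  simp only [mul_apply, sum_mul]
  rw [sum_comm]
  refine sum_congr rfl fun m _ => sum_congr rfl fun l _ => ?_
  rw [hM.apply _ b]
  ring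

end Matrix

noncomputable def sumPairingsDeriv {d m : ℕ} (nv : Fin m → Fin d)
    (M V : Matrix (Fin d) (Fin d) ℝ) : ℝ :=
  ∑ σ : Perm (Fin m),
    if σ.IsPairing then
      ∑ i ∈ univ.filter (fun i => i < σ i),
        (∏ j ∈ (univ.filter fun j => j < σ j).erase i, M (nv j) (nv (σ j))) * V (nv i) (nv (σ i))
    else 0

section

variable {d m : ℕ} (nv : Fin m → Fin d)

theorem sumPairings_eq_sum_filter (M : Matrix (Fin d) (Fin d) ℝ) :
    sumPairings nv M = ∑ σ ∈ univ.filter Perm.IsPairing, σ.blockProd fun i j => M (nv i) (nv j) :=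
  (sum_filter _ _).symm

theorem sumPairingsDeriv_eq_sum_filter (M V : Matrix (Fin d) (Fin d) ℝ) :
    sumPairingsDeriv nv M V = ∑ σ ∈ univ.filter Perm.IsPairing,
      ∑ i ∈ univ.filter (fun i => i < σ i),
        (∏ j ∈ (univ.filter fun j => j < σ j).erase i, M (nv j) (nv (σ j))) * V (nv i) (nv (σ i)) :=
  (sum_filter _ _).symm

theorem sumPairingsDeriv_neg (M V : Matrix (Fin d) (Fin d) ℝ) :
    sumPairingsDeriv nv M (-V) = -sumPairingsDeriv nv M V := by
  simp only [sumPairingsDeriv_eq_sum_filter, Matrix.neg_apply, mul_neg, sum_neg_distrib]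

theorem hasDerivAt_sumPairings {M : ℝ → Matrix (Fin d) (Fin d) ℝ} {M' : Matrix (Fin d) (Fin d) ℝ}
    {s : ℝ} (hM : HasDerivAt M M' s) :
    HasDerivAt (fun u => sumPairings nv (M u)) (sumPairingsDeriv nv (M s) M') s := by
  have hentry : ∀ a b, HasDerivAt (fun u => M u a b) (M' a b) s := fun a b =>
    hasDerivAt_pi.1 (hasDerivAt_pi.1 hM a) b
  simp only [sumPairings_eq_sum_filter, sumPairingsDeriv_eq_sum_filter, Perm.blockProd]
  exact HasDerivAt.fun_sum fun σ _ => by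
    simpa only [smul_eq_mul] using HasDerivAt.fun_finsetProd fun i _ => hentry (nv i) (nv (σ i))

end

section

open Pairing

variable {d n : ℕ} (nv : Fin n → Fin d) (M : Matrix (Fin d) (Fin d) ℝ)

theorem sumPairings_snoc_snoc (m l : Fin d) :
    sumPairings (Fin.snoc (Fin.snoc nv m) l) M = ∑ σ ∈ univ.filter Perm.IsPairing,
      (σ.blockProd (fun i j => M (nv i) (nv j)) * M m l + ∑ i, M (nv i) m * M (nv (σ i)) l *
        ∏ j ∈ ((univ.filter fun j => j < σ j).erase i).erase (σ i), M (nv j) (nv (σ j))) := by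
  rw [sumPairings_eq_sum_filter, sum_filter_isPairing_add_two]
  refine sum_congr rfl fun σ hσ => ?_
  simp only [blockProd_addBlock, blockProd_splitBlock (mem_filter.1 hσ).2, snoc_snoc_old,
    snoc_snoc_penult, snoc_snoc_ult]

theorem sum_sum_sumPairings_snoc_snoc_mul {Q : Matrix (Fin d) (Fin d) ℝ} (hM : M.IsSymm)
    (hQ : Q.IsSymm) :
    ∑ m, ∑ l, sumPairings (Fin.snoc (Fin.snoc nv m) l) M * Q m l
      = sumPairings nv M * (M * Q).trace + 2 * sumPairingsDeriv nv M (M * Q * M) := by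
  have hMQM := (hM.mul_mul_self hQ).apply
  calc ∑ m, ∑ l, sumPairings (Fin.snoc (Fin.snoc nv m) l) M * Q m l
      = ∑ σ ∈ univ.filter Perm.IsPairing,
          (σ.blockProd (fun i j => M (nv i) (nv j)) * (M * Q).trace + ∑ i,
            (∏ j ∈ ((univ.filter fun j => j < σ j).erase i).erase (σ i), M (nv j) (nv (σ j))) *
              (M * Q * M) (nv i) (nv (σ i))) := by
        simp only [sumPairings_snoc_snoc, sum_mul, add_mul, sum_add_distrib,
          ← Matrix.sum_sum_mul_eq_trace_mul hQ, ← Matrix.sum_sum_mul_mul_eq_mul_mul_apply hM,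
          mul_sum]
        congr 1
        · rw [sum_comm_cycle]
          simp only [mul_assoc]
        · rw [sum_comm_cycle]
          refine sum_congr rfl fun σ _ => ?_
          rw [sum_comm_cycle]
          exact sum_congr rfl fun _ _ => sum_congr rfl fun _ _ => sum_congr rfl fun _ _ => by ring
    _ = sumPairings nv M * (M * Q).trace + 2 * sumPairingsDeriv nv M (M * Q * M) := by
        rw [sum_congr rfl fun σ hσ => by
          rw [(mem_filter.1 hσ).2.sum_prod_erase_erase_mul (fun a b => M (nv a) (nv b)) _
            fun i j => hMQM (nv j) (nv i)],
          sumPairings_eq_sum_filter, sumPairingsDeriv_eq_sum_filter, sum_add_distrib, sum_mul,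
          mul_sum]

end

section Calculus

variable {n 𝕜 : Type*} [Fintype n] [RCLike 𝕜]

attribute [local instance] Matrix.linftyOpNormedAddCommGroup Matrix.linftyOpNormedSpace in
theorem Matrix.hasDerivAt_of_affine {P : 𝕜 → Matrix n n 𝕜} {Q : Matrix n n 𝕜} {s : 𝕜}
    (hP : ∀ u, P u = P s + (u - s) • Q) : HasDerivAt P Q s := by
  rw [funext hP]
  exact ((((hasDerivAt_id' s).sub_const s).smul_const Q).const_add (P s)).congr_deriv (one_smul _ _)

attribute [local instance] Matrix.linftyOpNormedAddCommGroup Matrix.linftyOpNormedRing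
  Matrix.linftyOpNormedAlgebra in
theorem HasDerivAt.matrix_inv [DecidableEq n] {P : 𝕜 → Matrix n n 𝕜} {P' : Matrix n n 𝕜} {s : 𝕜}
    (hP : HasDerivAt P P' s) (hs : IsUnit (P s).det) :
    HasDerivAt (fun u => (P u)⁻¹) (-((P s)⁻¹ * P' * (P s)⁻¹)) s := by
  obtain ⟨w, hw⟩ := (Matrix.isUnit_iff_isUnit_det _).mpr hs
  have hinv := hasFDerivAt_ringInverse (𝕜 := 𝕜) w
  rw [hw] at hinv
  simp only [Matrix.nonsing_inv_eq_ringInverse]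
  refine (hinv.comp_hasDerivAt s hP).congr_deriv ?_
  simp [← hw]

/-- `det (P u) = det (P s) * det (1 + (u - s) • (P s)⁻¹ * Q)`, whose first-order Taylor
coefficient is given by `Matrix.det_one_add_smul`. -/
theorem Matrix.hasDerivAt_det_of_affine [DecidableEq n] {P : 𝕜 → Matrix n n 𝕜}
    {Q : Matrix n n 𝕜} {s : 𝕜}
    (hP : ∀ u, P u = P s + (u - s) • Q) (hs : IsUnit (P s).det) :
    HasDerivAt (fun u => (P u).det) ((P s).det * ((P s)⁻¹ * Q).trace) s := by
  set p : Polynomial 𝕜 :=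
    (det (1 + (Polynomial.X : Polynomial 𝕜) • ((P s)⁻¹ * Q).map Polynomial.C)).divX.divX
  have hexp : (fun u => (P u).det) = fun u => (P s).det *
      (1 + ((P s)⁻¹ * Q).trace * (u - s) + p.eval (u - s) * (u - s) ^ 2) := by
    funext u
    rw [← det_one_add_smul, ← det_mul, Matrix.mul_add, Matrix.mul_one, Matrix.mul_smul,
      ← Matrix.mul_assoc, mul_nonsing_inv _ hs, Matrix.one_mul, ← hP]
  have hlin : HasDerivAt (fun u : 𝕜 => u - s) 1 s := (hasDerivAt_id s).sub_const s
  have hp := HasDerivAt.comp (h₂ := fun x => p.eval x) (h := fun u => u - s) s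
    (p.hasDerivAt (s - s)) hlin
  rw [hexp]
  simpa using (((hlin.const_mul (((P s)⁻¹ * Q).trace)).const_add 1).add
    (hp.mul (hlin.pow 2))).const_mul (P s).det

end Calculus

theorem stmt3 (d k : ℕ) (P0 P1 : Matrix (Fin d) (Fin d) ℝ)
    (h0s : P0.IsSymm) (h0p : P0.PosDef) (h1s : P1.IsSymm) (h1p : P1.PosDef)
    (nv : Fin (2 * k) → Fin d) (s : ℝ) (hs : s ∈ Set.Ioo (0 : ℝ) 1) :
    deriv (fun u : ℝ =>
        sumPairings nv (u • P0 + (1 - u) • P1)⁻¹ /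
          Real.sqrt (u • P0 + (1 - u) • P1).det) s =
      -(1 / 2) * ∑ m : Fin d, ∑ l : Fin d,
        sumPairings (Fin.snoc (Fin.snoc nv m) l) (s • P0 + (1 - s) • P1)⁻¹ *
          (P0 - P1) m l / Real.sqrt (s • P0 + (1 - s) • P1).det := by
  obtain ⟨P, hP⟩ : ∃ P : ℝ → Matrix (Fin d) (Fin d) ℝ, ∀ u, u • P0 + (1 - u) • P1 = P u :=
    ⟨_, fun _ => rfl⟩
  simp only [hP]
  have hPaff : ∀ u, P u = P s + (u - s) • (P0 - P1) := fun u => by rw [← hP, ← hP]; module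
  have hpos : 0 < (P s).det := hP s ▸ ((h0p.smul hs.1).add (h1p.smul (sub_pos.2 hs.2))).det_pos
  have hunit : IsUnit (P s).det := hpos.ne'.isUnit
  have hsymm : (P s)⁻¹.IsSymm := hP s ▸ ((h0s.smul s).add (h1s.smul (1 - s))).inv
  have hnum := hasDerivAt_sumPairings nv ((Matrix.hasDerivAt_of_affine hPaff).matrix_inv hunit)
  have hden := (Real.hasDerivAt_sqrt hpos.ne').comp s (Matrix.hasDerivAt_det_of_affine hPaff hunit)
  refine ((hnum.div hden (Real.sqrt_pos.2 hpos).ne').deriv).trans ?_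
  simp only [Function.comp_apply, sumPairingsDeriv_neg, ← sum_div,
    sum_sum_sumPairings_snoc_snoc_mul nv _ hsymm (h0s.sub h1s)]
  have hr := Real.sqrt_pos.2 hpos
  have hsq := Real.sq_sqrt hpos.le
  generalize √(P s).det = r at hr hsq ⊢
  rw [← hsq]
  field_simp
  ring
end

section
/- Let t_0, t_1 be distinct positive reals and let α ≥ 1 be an integer. Then ∫_0^1 s^{α−1} (s t_0 + (1−s) t_1)^{−α} ds = ((−1)^{α−1}/(α−1)!) · ∂_{t_0}^{α−1} [ (ln t_0 − ln t_1)/(t_0 − t_1) ], where the derivative on the right is the (α−1)-st partial derivative in the variable t_0 of the first divided difference of the natural logarithm. -/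
/-!
The divided difference of `log` is the average of `log' = (·)⁻¹` along the segment,
`(log t - log t₁) / (t - t₁) = ∫₀¹ (s t + (1 - s) t₁)⁻¹ ds`. Differentiating `n` times in `t`
under the integral sign (dominated by a uniform positive lower bound of `s t + (1 - s) t₁`
near `t`) yields `(-1)ⁿ n! ∫₀¹ sⁿ (s t + (1 - s) t₁)^(-(n+1)) ds`.
-/

open MeasureTheory Set

lemma min_le_convexComb {s : ℝ} (t t1 : ℝ) (hs0 : 0 ≤ s) (hs1 : s ≤ 1) :
    min t t1 ≤ s * t + (1 - s) * t1 := by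
  nlinarith [min_le_left t t1, min_le_right t t1]

lemma convexComb_pos {t t1 s : ℝ} (ht : 0 < t) (ht1 : 0 < t1) (hs0 : 0 ≤ s) (hs1 : s ≤ 1) :
    0 < s * t + (1 - s) * t1 :=
  (lt_min ht ht1).trans_le (min_le_convexComb t t1 hs0 hs1)

lemma intervalIntegrable_mul_zpow_convexComb {t t1 : ℝ} (ht : 0 < t) (ht1 : 0 < t1)
    {f : ℝ → ℝ} (hf : Continuous f) (m : ℤ) :
    IntervalIntegrable (fun s => f s * (s * t + (1 - s) * t1) ^ m) volume 0 1 := by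
  refine ContinuousOn.intervalIntegrable (hf.continuousOn.mul (ContinuousOn.zpow₀ ?_ m ?_))
  · fun_prop
  · rw [uIcc_of_le zero_le_one]
    exact fun s hs => Or.inl (convexComb_pos ht ht1 hs.1 hs.2).ne'

lemma integral_inv_convexComb {t t1 : ℝ} (ht : 0 < t) (ht1 : 0 < t1) (hne : t ≠ t1) :
    ∫ s in (0:ℝ)..1, (s * t + (1 - s) * t1)⁻¹ = (Real.log t - Real.log t1) / (t - t1) := by
  have hsub : t - t1 ≠ 0 := sub_ne_zero.2 hne
  calc ∫ s in (0:ℝ)..1, (s * t + (1 - s) * t1)⁻¹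
      = ∫ s in (0:ℝ)..1, ((t - t1) * s + t1)⁻¹ := by congr 1; ext s; ring_nf
    _ = (t - t1)⁻¹ * ∫ x in t1..t, x⁻¹ := by
        rw [intervalIntegral.integral_comp_mul_add (fun x => x⁻¹) hsub]; simp
    _ = (Real.log t - Real.log t1) / (t - t1) := by
        rw [integral_inv_of_pos ht1 ht, Real.log_div ht.ne' ht1.ne', div_eq_inv_mul]

lemma norm_mul_pow_mul_zpow_neg_le {c s g δ : ℝ} (k m : ℕ) (hs0 : 0 ≤ s) (hs1 : s ≤ 1)
    (hδ : 0 < δ) (hg : δ ≤ g) :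
    ‖c * s ^ k * g ^ (-(m : ℤ))‖ ≤ ‖c‖ * δ ^ (-(m : ℤ)) := by
  have hpow : ‖s ^ k‖ ≤ 1 := by
    rw [norm_pow, Real.norm_of_nonneg hs0]
    exact pow_le_one₀ hs0 hs1
  have hzpow : ‖g ^ (-(m : ℤ))‖ ≤ δ ^ (-(m : ℤ)) := by
    rw [Real.norm_of_nonneg (zpow_nonneg (hδ.trans_le hg).le _), zpow_neg, zpow_neg]
    exact inv_anti₀ (zpow_pos hδ _) (zpow_le_zpow_left₀ (by omega) hδ.le hg)
  calc ‖c * s ^ k * g ^ (-(m : ℤ))‖ = ‖c‖ * ‖s ^ k‖ * ‖g ^ (-(m : ℤ))‖ := by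
        rw [norm_mul, norm_mul]
    _ ≤ ‖c‖ * 1 * δ ^ (-(m : ℤ)) := by gcongr
    _ = ‖c‖ * δ ^ (-(m : ℤ)) := by rw [mul_one]

lemma hasDerivAt_pow_mul_zpow_convexComb {s t1 x : ℝ} (k m : ℕ)
    (hx : s * x + (1 - s) * t1 ≠ 0) :
    HasDerivAt (fun y => s ^ k * (s * y + (1 - s) * t1) ^ (-(m : ℤ)))
      (-(m : ℝ) * s ^ (k + 1) * (s * x + (1 - s) * t1) ^ (-((m + 1 : ℕ) : ℤ))) x := by
  have hlin : HasDerivAt (fun y => s * y + (1 - s) * t1) s x := by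
    simpa using ((hasDerivAt_id x).const_mul s).add_const ((1 - s) * t1)
  refine (((hasDerivAt_zpow _ _ (Or.inl hx)).comp x hlin).const_mul (s ^ k)).congr_deriv ?_
  rw [show -(m : ℤ) - 1 = -((m + 1 : ℕ) : ℤ) by push_cast; ring]
  push_cast
  ring

lemma hasDerivAt_integral_pow_mul_zpow_convexComb {t t1 : ℝ} (ht : 0 < t) (ht1 : 0 < t1)
    (k m : ℕ) :
    HasDerivAt (fun x => ∫ s in (0:ℝ)..1, s ^ k * (s * x + (1 - s) * t1) ^ (-(m : ℤ)))
      (∫ s in (0:ℝ)..1,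
        -(m : ℝ) * s ^ (k + 1) * (s * t + (1 - s) * t1) ^ (-((m + 1 : ℕ) : ℤ))) t := by
  set δ := min (t / 2) t1
  have hδ : 0 < δ := lt_min (half_pos ht) ht1
  have hδ_le : ∀ x ∈ Ioi (t / 2), ∀ s ∈ Icc (0:ℝ) 1, δ ≤ s * x + (1 - s) * t1 :=
    fun x hx s hs => (min_le_min_right t1 hx.le).trans (min_le_convexComb x t1 hs.1 hs.2)
  have hIoc : ∀ s ∈ uIoc (0:ℝ) 1, s ∈ Icc (0:ℝ) 1 := fun s hs => by
    rw [uIoc_of_le zero_le_one] at hs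
    exact Ioc_subset_Icc_self hs
  refine (intervalIntegral.hasDerivAt_integral_of_dominated_loc_of_deriv_le
    (F := fun x s => s ^ k * (s * x + (1 - s) * t1) ^ (-(m : ℤ)))
    (F' := fun x s =>
      -(m : ℝ) * s ^ (k + 1) * (s * x + (1 - s) * t1) ^ (-((m + 1 : ℕ) : ℤ)))
    (bound := fun _ => ‖-(m : ℝ)‖ * δ ^ (-((m + 1 : ℕ) : ℤ)))
    (Ioi_mem_nhds (half_lt_self ht)) ?_
    (intervalIntegrable_mul_zpow_convexComb ht ht1 (continuous_pow k) _)
    ((intervalIntegrable_mul_zpow_convexComb ht ht1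
      (f := fun s => -(m : ℝ) * s ^ (k + 1)) (by fun_prop) _).def'
      |>.aestronglyMeasurable)
    (ae_of_all _ fun s hs x hx => ?_) intervalIntegrable_const
    (ae_of_all _ fun s hs x hx => ?_)).2
  · filter_upwards [lt_mem_nhds ht] with x hx
    exact (intervalIntegrable_mul_zpow_convexComb hx ht1 (continuous_pow k) _).def'
      |>.aestronglyMeasurable
  · exact norm_mul_pow_mul_zpow_neg_le _ _ (hIoc s hs).1 (hIoc s hs).2 hδ
      (hδ_le x hx s (hIoc s hs))
  · exact hasDerivAt_pow_mul_zpow_convexComb k m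
      (hδ.trans_le (hδ_le x hx s (hIoc s hs))).ne'

lemma iteratedDeriv_logDivDiff_eq_integral {t1 : ℝ} (ht1 : 0 < t1) (n : ℕ) {t : ℝ}
    (ht : 0 < t) (hne : t ≠ t1) :
    iteratedDeriv n (fun u => (Real.log u - Real.log t1) / (u - t1)) t =
      (-1) ^ n * n.factorial *
        ∫ s in (0:ℝ)..1, s ^ n * (s * t + (1 - s) * t1) ^ (-((n + 1 : ℕ) : ℤ)) := by
  induction n generalizing t with
  | zero => simp [integral_inv_convexComb ht ht1 hne]
  | succ n ih =>
    have hnhds : {u : ℝ | 0 < u ∧ u ≠ t1} ∈ nhds t :=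
      ((isOpen_lt continuous_const continuous_id).inter isOpen_ne).mem_nhds ⟨ht, hne⟩
    have hderiv := (hasDerivAt_integral_pow_mul_zpow_convexComb ht ht1 n (n + 1)).const_mul
      ((-1 : ℝ) ^ n * n.factorial)
    rw [iteratedDeriv_succ, Filter.EventuallyEq.deriv_eq (Filter.eventually_of_mem hnhds
      fun u hu => ih hu.1 hu.2), hderiv.deriv, ← intervalIntegral.integral_const_mul,
      ← intervalIntegral.integral_const_mul]
    congr 1
    ext s
    push_cast [Nat.factorial_succ]
    ring

theorem stmt5 (t0 t1 : ℝ) (h0 : 0 < t0) (h1 : 0 < t1) (hne : t0 ≠ t1)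
    (α : ℕ) (hα : 1 ≤ α) :
    ∫ s in (0:ℝ)..1, s ^ (α - 1) * (s * t0 + (1 - s) * t1) ^ (-(α : ℤ)) =
      ((-1 : ℝ) ^ (α - 1) / (Nat.factorial (α - 1) : ℝ)) *
        iteratedDeriv (α - 1)
          (fun u => (Real.log u - Real.log t1) / (u - t1)) t0 := by
  obtain ⟨n, rfl⟩ : ∃ n, α = n + 1 := ⟨α - 1, by omega⟩
  rw [Nat.add_sub_cancel, iteratedDeriv_logDivDiff_eq_integral h1 n h0 hne]
  generalize (∫ s in (0:ℝ)..1, _ : ℝ) = I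
  field_simp
  rw [← pow_mul, Even.neg_one_pow ⟨n, by ring⟩, mul_one]
end

section
/- Let t_0,…,t_n be pairwise distinct positive reals, let α = (α_0,…,α_n) be positive integers with |α| = α_0 + ⋯ + α_n, set β_j = α_j − 1, and let p > 0 be a real number. Then: (i) if p ∉ {1, 2, …, |α|−1}, then ∫_{Σ_n} ∏_{j=0}^n s_j^{α_j−1} (Σ_{j=0}^n s_j t_j)^{−p} ds = (∏_{j=1}^{|α|−1}(j − p))^{−1} · ∂_{t_0}^{β_0} ⋯ ∂_{t_n}^{β_n} [t_0,…,t_n; u ↦ u^{|α|−1−p}]; and (ii) if |α| ≥ 2 and p = |α| − 1, then ∫_{Σ_n} ∏_{j=0}^n s_j^{α_j−1} (Σ_{j=0}^n s_j t_j)^{−p} ds = ((−1)^{|α|}/Γ(p)) · ∂_{t_0}^{β_0} ⋯ ∂_{t_n}^{β_n} [t_0,…,t_n; u ↦ ln u]. In both cases the partial derivatives are applied to the divided difference regarded as a smooth function of the pairwise distinct positive nodes. -/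
open MeasureTheory

/-- Integral over the standard `n`-simplex, with the convention `s 0 = 1 − s 1 − ⋯ − s n`. -/
noncomputable def simplexIntegral (n : ℕ) (G : (Fin (n + 1) → ℝ) → ℝ) : ℝ :=
  ∫ s in {s : Fin n → ℝ | (∀ i, 0 ≤ s i) ∧ ∑ i, s i ≤ 1},
    G (Fin.cons (1 - ∑ i, s i) s)

/-- Newton divided difference at pairwise distinct nodes. -/
noncomputable def divDiff {n : ℕ} (f : ℝ → ℝ) (x : Fin (n + 1) → ℝ) : ℝ :=
  ∑ j, f (x j) / ∏ l ∈ Finset.univ.erase j, (x j - x l)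

/-- Partial derivative in the `j`-th coordinate of a function of several real variables. -/
noncomputable def pdCoord {n : ℕ} (j : Fin n) (F : (Fin n → ℝ) → ℝ) :
    (Fin n → ℝ) → ℝ :=
  fun x => deriv (fun t => F (Function.update x j t)) (x j)

/-- Iterated partial derivative `∂_{x_0}^{β 0} ⋯ ∂_{x_{n−1}}^{β (n−1)}`. -/
noncomputable def pdMulti {n : ℕ} (β : Fin n → ℕ) (F : (Fin n → ℝ) → ℝ) :
    (Fin n → ℝ) → ℝ :=
  (List.finRange n).foldr (fun j G => (pdCoord j)^[β j] G) F

/-!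
Hermite–Genocchi: if the derivatives of `f` are continuous on `(0, ∞)`, then `[t₀, …, tₙ; f]` is
the integral of `f⁽ⁿ⁾(s₀t₀ + ⋯ + sₙtₙ)` over the simplex. By induction on `n`: integrating out
`s₁` with the fundamental theorem of calculus leaves a difference quotient of two integrals over
`(n-1)`-simplices, which is the recursion of divided differences. Differentiating under the
integral sign, `∂/∂tⱼ` multiplies the integrand by `sⱼ` and raises the order of the derivative of
`f` by one, so `∂^β [t; f] = ∫ sᵝ f⁽ⁿ⁺|β|⁾(s·t) ds`. With `n + |β| = |α| - 1`, the derivative of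
`u ↦ u^(|α|-1-p)` of that order is `∏_{j=1}^{|α|-1} (j - p) · u^(-p)`, and that of `log` is
`(-1)^|α| Γ(p) u^(-p)` when `p = |α| - 1`.
-/

open Set Finset Topology

namespace HermiteGenocchi

variable {n : ℕ}

def cornerSimplex (n : ℕ) : Set (Fin n → ℝ) := {s | (∀ i, 0 ≤ s i) ∧ ∑ i, s i ≤ 1}

noncomputable def bary (s : Fin n → ℝ) : Fin (n + 1) → ℝ := Fin.cons (1 - ∑ i, s i) s

noncomputable def baryComb (t : Fin (n + 1) → ℝ) (s : Fin n → ℝ) : ℝ := ∑ k, bary s k * t k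

theorem sum_bary (s : Fin n → ℝ) : ∑ k, bary s k = 1 := by
  simp [bary, Fin.sum_cons]

theorem bary_nonneg {s : Fin n → ℝ} (hs : s ∈ cornerSimplex n) (k : Fin (n + 1)) :
    0 ≤ bary s k := by
  refine Fin.cases ?_ (fun i => ?_) k
  · simpa [bary] using hs.2
  · simpa [bary] using hs.1 i

theorem bary_le_one {s : Fin n → ℝ} (hs : s ∈ cornerSimplex n) (k : Fin (n + 1)) :
    bary s k ≤ 1 :=
  (sum_bary s).le.trans' <| single_le_sum (fun i _ => bary_nonneg hs i) (mem_univ k)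

theorem baryComb_mem_Icc {t : Fin (n + 1) → ℝ} {s : Fin n → ℝ} (hs : s ∈ cornerSimplex n)
    {a b : ℝ} (ht : ∀ k, t k ∈ Icc a b) : baryComb t s ∈ Icc a b := by
  have hw := bary_nonneg hs
  constructor
  · calc a = ∑ k, bary s k * a := by rw [← sum_mul, sum_bary, one_mul]
      _ ≤ baryComb t s := sum_le_sum fun k _ => mul_le_mul_of_nonneg_left (ht k).1 (hw k)
  · calc baryComb t s ≤ ∑ k, bary s k * b :=
          sum_le_sum fun k _ => mul_le_mul_of_nonneg_left (ht k).2 (hw k)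
      _ = b := by rw [← sum_mul, sum_bary, one_mul]

theorem baryComb_pos {t : Fin (n + 1) → ℝ} (ht : ∀ k, 0 < t k) {s : Fin n → ℝ}
    (hs : s ∈ cornerSimplex n) : 0 < baryComb t s := by
  have hinf : 0 < univ.inf' univ_nonempty t := (lt_inf'_iff _).2 fun k _ => ht k
  exact hinf.trans_le
    (baryComb_mem_Icc hs (b := univ.sup' univ_nonempty t)
      fun k => ⟨inf'_le t (mem_univ k), le_sup' t (mem_univ k)⟩).1

theorem continuous_bary : Continuous (bary : (Fin n → ℝ) → Fin (n + 1) → ℝ) := by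
  refine continuous_pi fun k => Fin.cases ?_ (fun i => ?_) k
  · simpa [bary] using by fun_prop
  · simpa [bary] using continuous_apply i

theorem continuous_baryComb (t : Fin (n + 1) → ℝ) : Continuous (baryComb t) := by
  unfold baryComb
  have := continuous_bary (n := n)
  fun_prop

theorem continuousOn_comp_baryComb {h : ℝ → ℝ} (hh : ContinuousOn h (Ioi 0))
    {t : Fin (n + 1) → ℝ} (ht : ∀ k, 0 < t k) :
    ContinuousOn (fun s => h (baryComb t s)) (cornerSimplex n) :=
  hh.comp (continuous_baryComb t).continuousOn fun _ hs => baryComb_pos ht hs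

theorem isCompact_cornerSimplex (n : ℕ) : IsCompact (cornerSimplex n) := by
  have hclosed : IsClosed (cornerSimplex n) := by
    simp only [cornerSimplex, ofPred_and, ofPred_forall]
    exact (isClosed_iInter fun i => isClosed_le continuous_const (continuous_apply i)).inter
      (isClosed_le (by fun_prop) continuous_const)
  refine Metric.isCompact_of_isClosed_isBounded hclosed
    ((Metric.isBounded_Icc (0 : Fin n → ℝ) 1).subset fun s hs => ⟨hs.1, fun i => ?_⟩)
  exact (single_le_sum (fun k _ => hs.1 k) (mem_univ i)).trans hs.2

theorem measurableSet_cornerSimplex (n : ℕ) : MeasurableSet (cornerSimplex n) :=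
  (isCompact_cornerSimplex n).isClosed.measurableSet

theorem integrableOn_comp_baryComb {h : ℝ → ℝ} (hh : ContinuousOn h (Ioi 0))
    {t : Fin (n + 1) → ℝ} (ht : ∀ k, 0 < t k) :
    IntegrableOn (fun s => h (baryComb t s)) (cornerSimplex n) :=
  (continuousOn_comp_baryComb hh ht).integrableOn_compact (isCompact_cornerSimplex n)

theorem cons_mem_cornerSimplex_iff (u : ℝ) (s : Fin n → ℝ) :
    Fin.cons u s ∈ cornerSimplex (n + 1) ↔ s ∈ cornerSimplex n ∧ u ∈ Icc 0 (1 - ∑ i, s i) := by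
  simp only [cornerSimplex, mem_ofPred_eq, Fin.forall_fin_succ, Fin.cons_zero, Fin.cons_succ,
    Fin.sum_cons, Set.mem_Icc]
  constructor
  · rintro ⟨⟨hu, hs⟩, hsum⟩
    exact ⟨⟨hs, by linarith [sum_nonneg fun i (_ : i ∈ Finset.univ) => hs i]⟩, hu, by linarith⟩
  · rintro ⟨⟨hs, -⟩, hu, hu'⟩
    exact ⟨⟨hu, hs⟩, by linarith⟩

theorem setIntegral_cornerSimplex_zero (g : (Fin 0 → ℝ) → ℝ) :
    ∫ s in cornerSimplex 0, g s = g 0 := by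
  have huniv : cornerSimplex 0 = univ := by ext s; simp [cornerSimplex]
  rw [huniv, Measure.restrict_univ, Measure.volume_pi_eq_dirac 0, integral_dirac]

theorem setIntegral_cornerSimplex_succ {g : (Fin (n + 1) → ℝ) → ℝ}
    (hg : IntegrableOn g (cornerSimplex (n + 1))) :
    ∫ x in cornerSimplex (n + 1), g x =
      ∫ s in cornerSimplex n, ∫ u in (0)..(1 - ∑ i, s i), g (Fin.cons u s) := by
  set G := (cornerSimplex (n + 1)).indicator g
  have hG : Integrable G := (integrable_indicator_iff (measurableSet_cornerSimplex _)).2 hg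
  set e := (MeasurableEquiv.piFinSuccAbove (fun _ : Fin (n + 1) => ℝ) 0).symm
  have he : ∀ p, e p = Fin.cons p.1 p.2 := fun p => by
    simp [e, MeasurableEquiv.piFinSuccAbove_symm_apply, Fin.insertNthEquiv]
  have hmp : MeasurePreserving e := (volume_preserving_piFinSuccAbove _ 0).symm
  have hslice : ∀ s, ∫ u, G (Fin.cons u s) =
      (cornerSimplex n).indicator (fun s => ∫ u in (0)..(1 - ∑ i, s i), g (Fin.cons u s)) s := by
    intro s
    by_cases hs : s ∈ cornerSimplex n
    · have hGs : (fun u => G (Fin.cons u s)) =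
          (Icc 0 (1 - ∑ i, s i)).indicator (fun u => g (Fin.cons u s)) := by
        ext u
        simp only [G, indicator, cons_mem_cornerSimplex_iff, hs, true_and]
      rw [hGs, integral_indicator measurableSet_Icc, integral_Icc_eq_integral_Ioc,
        ← intervalIntegral.integral_of_le (by linarith [hs.2]), indicator_of_mem hs]
    · simp [G, indicator, cons_mem_cornerSimplex_iff, hs]
  calc ∫ x in cornerSimplex (n + 1), g x = ∫ x, G x :=
        (integral_indicator (measurableSet_cornerSimplex _)).symm
    _ = ∫ p : ℝ × (Fin n → ℝ), G (Fin.cons p.1 p.2) := by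
        simp only [← he, hmp.integral_comp']
    _ = ∫ s, ∫ u, G (Fin.cons u s) := by
        refine integral_prod_symm _ ?_
        have h := hmp.integrable_comp_of_integrable hG
        simp only [Function.comp_def, he] at h
        exact h
    _ = _ := by
        simp only [hslice, integral_indicator (measurableSet_cornerSimplex _)]

theorem baryComb_cons (t : Fin (n + 2) → ℝ) (u : ℝ) (s : Fin n → ℝ) :
    baryComb t (Fin.cons u s) = (t 1 - t 0) * u + baryComb (t ∘ Fin.succAbove 1) s := by
  simp only [baryComb, bary, Fin.sum_univ_succ, Fin.cons_zero, Fin.cons_succ, Function.comp_apply,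
    Fin.succ_zero_eq_one, Fin.one_succAbove_zero, Fin.one_succAbove_succ]
  ring

theorem baryComb_comp_succAbove_zero (t : Fin (n + 2) → ℝ) (s : Fin n → ℝ) :
    baryComb (t ∘ Fin.succAbove 0) s =
      (t 1 - t 0) * (1 - ∑ i, s i) + baryComb (t ∘ Fin.succAbove 1) s := by
  simp only [baryComb, bary, Fin.sum_univ_succ, Fin.cons_zero, Fin.cons_succ, Function.comp_apply,
    Fin.succ_zero_eq_one, Fin.succAbove_zero, Fin.one_succAbove_zero, Fin.one_succAbove_succ]
  ring

theorem integral_deriv_comp_mul_add {g : ℝ → ℝ} (hg : ∀ u, 0 < u → DifferentiableAt ℝ g u)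
    (hg' : ContinuousOn (deriv g) (Ioi 0)) {c d L : ℝ} (hc : c ≠ 0) (hd : 0 < d)
    (hL : 0 < c * L + d) :
    ∫ u in (0)..L, deriv g (c * u + d) = (g (c * L + d) - g d) / c := by
  have hpos : uIcc d (c * L + d) ⊆ Ioi 0 := fun x hx => (lt_min hd hL).trans_le hx.1
  rw [intervalIntegral.integral_comp_mul_add _ hc, mul_zero, zero_add,
    intervalIntegral.integral_deriv_eq_sub' g rfl (fun x hx => hg x (hpos hx)) (hg'.mono hpos),
    smul_eq_mul, inv_mul_eq_div]

-- The factor `t j - t k` kills the term `j = k` and cancels the factor `l = k` of the others.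
theorem divDiff_comp_succAbove (f : ℝ → ℝ) {t : Fin (n + 2) → ℝ} (ht : Function.Injective t)
    (k : Fin (n + 2)) :
    divDiff f (t ∘ k.succAbove) =
      ∑ j, f (t j) * (t j - t k) / ∏ l ∈ univ.erase j, (t j - t l) := by
  rw [Fin.sum_univ_succAbove _ k, sub_self, mul_zero, zero_div, zero_add, divDiff]
  refine sum_congr rfl fun i _ => ?_
  have hsplit := mul_prod_erase (univ.erase (k.succAbove i)) (fun l => t (k.succAbove i) - t l)
    (mem_erase.2 ⟨(Fin.succAbove_ne k i).symm, mem_univ k⟩)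
  have himage : (univ.erase i).image k.succAbove = (univ.erase (k.succAbove i)).erase k := by
    rw [image_erase Fin.succAbove_right_injective, erase_right_comm]
    congr 1
    ext l
    simp [eq_comm]
  have hreindex : ∏ l ∈ univ.erase i, (t (k.succAbove i) - t (k.succAbove l)) =
      ∏ l ∈ (univ.erase (k.succAbove i)).erase k, (t (k.succAbove i) - t l) := by
    rw [← himage, prod_image Fin.succAbove_right_injective.injOn]
  have hne : t (k.succAbove i) - t k ≠ 0 :=
    sub_ne_zero.2 (ht.ne (Fin.succAbove_ne k i))
  simp only [Function.comp_apply]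
  rw [← hsplit, hreindex, mul_comm (f _), mul_div_mul_left _ _ hne]

theorem divDiff_eq_sub_div (f : ℝ → ℝ) {t : Fin (n + 2) → ℝ} (ht : Function.Injective t)
    {a b : Fin (n + 2)} (hab : a ≠ b) :
    divDiff f t = (divDiff f (t ∘ a.succAbove) - divDiff f (t ∘ b.succAbove)) / (t b - t a) := by
  rw [eq_div_iff (sub_ne_zero.2 (ht.ne hab.symm)), divDiff_comp_succAbove f ht,
    divDiff_comp_succAbove f ht, ← sum_sub_distrib, divDiff, sum_mul]
  refine sum_congr rfl fun j _ => ?_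
  ring

noncomputable def simplexMoment (γ : Fin (n + 1) → ℕ) (h : ℝ → ℝ) (t : Fin (n + 1) → ℝ) : ℝ :=
  simplexIntegral n fun w => (∏ k, w k ^ γ k) * h (∑ k, w k * t k)

theorem simplexMoment_eq_setIntegral (γ : Fin (n + 1) → ℕ) (h : ℝ → ℝ) (t : Fin (n + 1) → ℝ) :
    simplexMoment γ h t =
      ∫ s in cornerSimplex n, (∏ k, bary s k ^ γ k) * h (baryComb t s) :=
  rfl

theorem simplexMoment_const_mul (γ : Fin (n + 1) → ℕ) (c : ℝ) (h : ℝ → ℝ)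
    (t : Fin (n + 1) → ℝ) :
    simplexMoment γ (fun u => c * h u) t = c * simplexMoment γ h t := by
  simp only [simplexMoment_eq_setIntegral, ← integral_const_mul, mul_left_comm c]

theorem norm_prod_bary_pow_le_one (γ : Fin (n + 1) → ℕ) {s : Fin n → ℝ}
    (hs : s ∈ cornerSimplex n) : ‖∏ k, bary s k ^ γ k‖ ≤ 1 := by
  rw [Real.norm_of_nonneg (prod_nonneg fun k _ => pow_nonneg (bary_nonneg hs k) _)]
  exact prod_le_one (fun k _ => pow_nonneg (bary_nonneg hs k) _)
    fun k _ => pow_le_one₀ (bary_nonneg hs k) (bary_le_one hs k)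

theorem continuousOn_moment_integrand (γ : Fin (n + 1) → ℕ) {h : ℝ → ℝ}
    (hh : ContinuousOn h (Ioi 0)) {t : Fin (n + 1) → ℝ} (ht : ∀ k, 0 < t k) :
    ContinuousOn (fun s => (∏ k, bary s k ^ γ k) * h (baryComb t s)) (cornerSimplex n) := by
  have := continuous_bary (n := n)
  exact Continuous.continuousOn (by fun_prop) |>.mul (continuousOn_comp_baryComb hh ht)

theorem prod_pow_update_add_one {ι M : Type*} [Fintype ι] [DecidableEq ι] [CommMonoid M]
    (x : ι → M) (γ : ι → ℕ) (j : ι) :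
    ∏ k, x k ^ Function.update γ j (γ j + 1) k = x j * ∏ k, x k ^ γ k := by
  rw [← mul_prod_erase _ _ (mem_univ j), ← mul_prod_erase univ (fun k => x k ^ γ k) (mem_univ j),
    Function.update_self, pow_succ', mul_assoc]
  congr 2
  exact prod_congr rfl fun k hk => by rw [Function.update_of_ne (ne_of_mem_erase hk)]

theorem hasDerivAt_baryComb_update (y : Fin (n + 1) → ℝ) (j : Fin (n + 1)) (s : Fin n → ℝ)
    (τ : ℝ) : HasDerivAt (fun τ => baryComb (Function.update y j τ) s) (bary s j) τ := by
  have h := fun k => (hasDerivAt_pi.1 (hasDerivAt_update y j τ) k).const_mul (bary s k)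
  refine (HasDerivAt.fun_sum (u := univ) fun k _ => h k).congr_deriv ?_
  simp [Pi.single_apply]

theorem update_mem_Icc {y : Fin (n + 1) → ℝ} (hy : ∀ i, 0 < y i) (j : Fin (n + 1)) {τ : ℝ}
    (hτ : τ ∈ Metric.ball (y j) (univ.inf' univ_nonempty y / 2)) (i : Fin (n + 1)) :
    Function.update y j τ i ∈
      Icc (univ.inf' univ_nonempty y / 2)
        (univ.sup' univ_nonempty y + univ.inf' univ_nonempty y) := by
  have hinf := inf'_le y (mem_univ i)
  have hsup := le_sup' y (mem_univ i)
  have hinf0 : 0 < univ.inf' univ_nonempty y := (lt_inf'_iff _).2 fun i _ => hy i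
  rw [Metric.mem_ball, Real.dist_eq, abs_lt] at hτ
  rcases eq_or_ne i j with rfl | hij
  · rw [Function.update_self]
    constructor <;> linarith
  · rw [Function.update_of_ne hij]
    constructor <;> linarith

theorem hasDerivAt_simplexMoment_update (γ : Fin (n + 1) → ℕ) {H H' : ℝ → ℝ}
    (hH : ∀ u, 0 < u → HasDerivAt H (H' u) u) (hH' : ContinuousOn H' (Ioi 0))
    {y : Fin (n + 1) → ℝ} (hy : ∀ i, 0 < y i) (j : Fin (n + 1)) :
    HasDerivAt (fun τ => simplexMoment γ H (Function.update y j τ))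
      (simplexMoment (Function.update γ j (γ j + 1)) H' y) (y j) := by
  have hHc : ContinuousOn H (Ioi 0) := fun u hu => (hH u hu).continuousAt.continuousWithinAt
  set m := univ.inf' univ_nonempty y
  set M := univ.sup' univ_nonempty y
  have hm : 0 < m / 2 := half_pos ((lt_inf'_iff _).2 fun i _ => hy i)
  have hpos : ∀ τ ∈ Metric.ball (y j) (m / 2), ∀ i, 0 < Function.update y j τ i :=
    fun τ hτ i => hm.trans_le (update_mem_Icc hy j hτ i).1
  -- near `y j` every node, hence every `baryComb`, stays in `[m / 2, M + m]`, where `H'` is bounded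
  obtain ⟨C, hC⟩ := isCompact_Icc.exists_bound_of_continuousOn
    (hH'.mono fun x hx => hm.trans_le hx.1 : ContinuousOn H' (Icc (m / 2) (M + m)))
  have hball : Metric.ball (y j) (m / 2) ∈ 𝓝 (y j) := Metric.ball_mem_nhds _ hm
  have hs := measurableSet_cornerSimplex n
  set γ' := Function.update γ j (γ j + 1)
  suffices HasDerivAt (fun τ => simplexMoment γ H (Function.update y j τ))
      (simplexMoment γ' H' (Function.update y j (y j))) (y j) by
    rwa [Function.update_eq_self] at this
  refine (hasDerivAt_integral_of_dominated_loc_of_deriv_le (μ := volume.restrict (cornerSimplex n))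
    (F' := fun τ s => (∏ k, bary s k ^ γ' k) * H' (baryComb (Function.update y j τ) s))
    (bound := fun _ => C) hball
    (Filter.eventually_of_mem hball fun τ hτ =>
      (continuousOn_moment_integrand γ hHc (hpos τ hτ)).aestronglyMeasurable hs)
    ?_ ?_ ?_ ?_ ?_).2
  · rw [Function.update_eq_self]
    exact (continuousOn_moment_integrand γ hHc hy).integrableOn_compact (isCompact_cornerSimplex n)
  · rw [Function.update_eq_self]
    exact (continuousOn_moment_integrand γ' hH' hy).aestronglyMeasurable hs
  · refine (ae_restrict_mem hs).mono fun s hs τ hτ => ?_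
    rw [norm_mul, ← one_mul C]
    exact mul_le_mul (norm_prod_bary_pow_le_one γ' hs)
      (hC _ (baryComb_mem_Icc hs (update_mem_Icc hy j hτ))) (norm_nonneg _) zero_le_one
  · exact integrableOn_const (isCompact_cornerSimplex n).measure_lt_top.ne
  · refine (ae_restrict_mem hs).mono fun s hs τ hτ => ?_
    have hpos' := baryComb_pos (hpos τ hτ) hs
    refine ((hH _ hpos').comp τ (hasDerivAt_baryComb_update y j s τ)).const_mul _ |>.congr_deriv ?_
    rw [prod_pow_update_add_one]
    ring

def posDistinctNodes (n : ℕ) : Set (Fin (n + 1) → ℝ) := {y | (∀ i, 0 < y i) ∧ Function.Injective y}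

theorem isOpen_posDistinctNodes (n : ℕ) : IsOpen (posDistinctNodes n) := by
  have hinj : {y : Fin (n + 1) → ℝ | Function.Injective y} =
      ⋂ (i) (j) (_ : i ≠ j), {y | y i ≠ y j} := by
    ext y
    simp only [mem_ofPred_eq, mem_iInter]
    exact ⟨fun hy i j hij => hy.ne hij, fun hy i j => not_imp_not.1 (hy i j)⟩
  rw [posDistinctNodes, ofPred_and, hinj, ofPred_forall]
  refine (isOpen_iInter_of_finite fun i => isOpen_lt continuous_const (continuous_apply i)).inter ?_
  exact isOpen_iInter_of_finite fun i => isOpen_iInter_of_finite fun j =>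
      isOpen_iInter_of_finite fun _ => isOpen_ne_fun (continuous_apply i) (continuous_apply j)

theorem pdCoord_eqOn {U : Set (Fin n → ℝ)} (hU : IsOpen U) {F G : (Fin n → ℝ) → ℝ}
    (h : EqOn F G U) (j : Fin n) : EqOn (pdCoord j F) (pdCoord j G) U := by
  intro y hy
  have hcont : Continuous fun τ : ℝ => Function.update y j τ :=
    continuous_const.update j continuous_id
  have hmem : Function.update y j (y j) ∈ U := by rwa [Function.update_eq_self]
  exact Filter.EventuallyEq.deriv_eq <|
    Filter.eventually_of_mem (hcont.continuousAt.preimage_mem_nhds (hU.mem_nhds hmem))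
      fun τ hτ => h hτ

section IteratedDerivatives

variable {f : ℝ → ℝ} (hf : ∀ k u, 0 < u → DifferentiableAt ℝ (deriv^[k] f) u)
include hf

theorem continuousOn_iterate_deriv (k : ℕ) : ContinuousOn (deriv^[k] f) (Ioi 0) :=
  fun u hu => (hf k u hu).continuousAt.continuousWithinAt

theorem setIntegral_iterate_deriv_comp_baryComb {t : Fin (n + 1) → ℝ} (ht : ∀ k, 0 < t k)
    (hinj : Function.Injective t) :
    ∫ s in cornerSimplex n, deriv^[n] f (baryComb t s) = divDiff f t := by
  have hcont := continuousOn_iterate_deriv hf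
  induction n with
  | zero =>
    rw [setIntegral_cornerSimplex_zero]
    simp [baryComb, bary, divDiff]
  | succ n ih =>
    have ht0 : ∀ k, 0 < (t ∘ Fin.succAbove 0) k := fun k => ht _
    have ht1 : ∀ k, 0 < (t ∘ Fin.succAbove 1) k := fun k => ht _
    have hc : t 1 - t 0 ≠ 0 := sub_ne_zero.2 (hinj.ne Fin.zero_ne_one.symm)
    have hslice : ∀ s ∈ cornerSimplex n,
        ∫ u in (0)..(1 - ∑ i, s i), deriv^[n + 1] f (baryComb t (Fin.cons u s)) =
          (deriv^[n] f (baryComb (t ∘ Fin.succAbove 0) s) -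
            deriv^[n] f (baryComb (t ∘ Fin.succAbove 1) s)) / (t 1 - t 0) := by
      intro s hs
      simp only [baryComb_cons, baryComb_comp_succAbove_zero, Function.iterate_succ_apply']
      refine integral_deriv_comp_mul_add (hf n) ?_ hc (baryComb_pos ht1 hs) ?_
      · simpa only [Function.iterate_succ_apply'] using hcont (n + 1)
      · rw [← baryComb_comp_succAbove_zero]
        exact baryComb_pos ht0 hs
    rw [setIntegral_cornerSimplex_succ (integrableOn_comp_baryComb (hcont _) ht),
      setIntegral_congr_fun (measurableSet_cornerSimplex n) hslice, integral_div,
      integral_sub (integrableOn_comp_baryComb (hcont n) ht0)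
        (integrableOn_comp_baryComb (hcont n) ht1),
      ih ht0 (hinj.comp Fin.succAbove_right_injective),
      ih ht1 (hinj.comp Fin.succAbove_right_injective),
      ← divDiff_eq_sub_div f hinj Fin.zero_ne_one]

theorem pdCoord_simplexMoment (γ : Fin (n + 1) → ℕ) (k : ℕ) {y : Fin (n + 1) → ℝ}
    (hy : ∀ i, 0 < y i) (j : Fin (n + 1)) :
    pdCoord j (simplexMoment γ (deriv^[k] f)) y =
      simplexMoment (Function.update γ j (γ j + 1)) (deriv^[k + 1] f) y := by
  have hH : ∀ u, 0 < u → HasDerivAt (deriv^[k] f) (deriv^[k + 1] f u) u := fun u hu => by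
    rw [Function.iterate_succ_apply']
    exact (hf k u hu).hasDerivAt
  exact (hasDerivAt_simplexMoment_update γ hH (continuousOn_iterate_deriv hf _) hy j).deriv

theorem pdCoord_iterate_eqOn {γ : Fin (n + 1) → ℕ} {k : ℕ} {F : (Fin (n + 1) → ℝ) → ℝ}
    (hF : EqOn F (simplexMoment γ (deriv^[k] f)) (posDistinctNodes n)) (j : Fin (n + 1)) (r : ℕ) :
    EqOn ((pdCoord j)^[r] F)
      (simplexMoment (Function.update γ j (γ j + r)) (deriv^[k + r] f)) (posDistinctNodes n) := by
  induction r with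
  | zero => simpa using hF
  | succ r ih =>
    intro y hy
    rw [Function.iterate_succ_apply', pdCoord_eqOn (isOpen_posDistinctNodes n) ih j hy,
      pdCoord_simplexMoment hf _ _ hy.1, Function.update_idem, Function.update_self, add_assoc,
      add_assoc]

theorem foldr_pdCoord_iterate_eqOn (β : Fin (n + 1) → ℕ) {γ : Fin (n + 1) → ℕ} {k : ℕ}
    {F : (Fin (n + 1) → ℝ) → ℝ} (hF : EqOn F (simplexMoment γ (deriv^[k] f)) (posDistinctNodes n))
    (l : List (Fin (n + 1))) :
    EqOn (l.foldr (fun j G => (pdCoord j)^[β j] G) F)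
      (simplexMoment (fun i => γ i + l.count i * β i) (deriv^[k + (l.map β).sum] f))
      (posDistinctNodes n) := by
  induction l with
  | nil => simpa using hF
  | cons j l ih =>
    refine (pdCoord_iterate_eqOn hf ih j (β j)).trans fun y _ => ?_
    congr 2
    · ext i
      rcases eq_or_ne i j with rfl | hij
      · simp [add_mul, add_assoc]
      · simp [Function.update_of_ne hij, hij.symm]
    · simp [add_assoc, add_comm (β j)]

theorem pdMulti_eqOn (β : Fin (n + 1) → ℕ) {k : ℕ} {F : (Fin (n + 1) → ℝ) → ℝ}
    (hF : EqOn F (simplexMoment 0 (deriv^[k] f)) (posDistinctNodes n)) :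
    EqOn (pdMulti β F) (simplexMoment β (deriv^[k + ∑ i, β i] f)) (posDistinctNodes n) := by
  have hcount : (fun i => (0 : Fin (n + 1) → ℕ) i + (List.finRange (n + 1)).count i * β i) = β := by
    ext i
    simp [List.count_eq_one_of_mem (List.nodup_finRange _) (List.mem_finRange i)]
  have := foldr_pdCoord_iterate_eqOn hf β hF (List.finRange (n + 1))
  rwa [hcount, ← Fin.sum_univ_def] at this

theorem pdMulti_divDiff (β : Fin (n + 1) → ℕ) {t : Fin (n + 1) → ℝ} (ht : t ∈ posDistinctNodes n) :
    pdMulti β (divDiff f) t = simplexMoment β (deriv^[n + ∑ i, β i] f) t := by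
  refine pdMulti_eqOn hf β (fun y hy => ?_) ht
  rw [← setIntegral_iterate_deriv_comp_baryComb hf hy.1 hy.2, simplexMoment_eq_setIntegral]
  simp only [Pi.zero_apply, pow_zero, prod_const_one, one_mul]

end IteratedDerivatives

theorem descPochhammer_eval_natCast_sub (m : ℕ) (p : ℝ) :
    (descPochhammer ℝ m).eval ((m : ℝ) - p) = ∏ j ∈ Icc 1 m, ((j : ℝ) - p) := by
  rw [descPochhammer_eval_eq_prod_range]
  induction m with
  | zero => simp
  | succ m ih =>
    rw [prod_range_succ', prod_Icc_succ_top (by omega), ← ih]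
    push_cast
    ring_nf

theorem iterate_deriv_rpow_natCast_sub (m : ℕ) (p : ℝ) :
    deriv^[m] (fun u : ℝ => u ^ ((m : ℝ) - p)) =
      fun u => (∏ j ∈ Icc 1 m, ((j : ℝ) - p)) * u ^ (-p) := by
  ext u
  rw [Real.iter_deriv_rpow_const, descPochhammer_eval_natCast_sub, sub_sub_cancel_left]

theorem differentiableAt_iterate_deriv_rpow_const (r : ℝ) (k : ℕ) {u : ℝ} (hu : 0 < u) :
    DifferentiableAt ℝ (deriv^[k] fun x : ℝ => x ^ r) u := by
  rw [funext (Real.iter_deriv_rpow_const r · k)]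
  exact (Real.differentiableAt_rpow_const_of_ne _ hu.ne').const_mul _

theorem iterate_deriv_log_succ (m : ℕ) :
    deriv^[m + 1] Real.log = fun u : ℝ => (-1) ^ m * (m.factorial : ℝ) * u ^ (-((m : ℝ) + 1)) := by
  ext u
  rw [Function.iterate_succ_apply, Real.deriv_log', iter_deriv_inv, ← Real.rpow_intCast]
  push_cast
  ring_nf

theorem differentiableAt_iterate_deriv_log (k : ℕ) {u : ℝ} (hu : 0 < u) :
    DifferentiableAt ℝ (deriv^[k] Real.log) u := by
  cases k with
  | zero => exact Real.differentiableAt_log hu.ne'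
  | succ m =>
    rw [iterate_deriv_log_succ]
    exact (Real.differentiableAt_rpow_const_of_ne _ hu.ne').const_mul _

theorem sum_tsub_one_add_card {ι : Type*} [Fintype ι] (α : ι → ℕ) (hα : ∀ i, 1 ≤ α i) :
    ∑ i, (α i - 1) + Fintype.card ι = ∑ i, α i := by
  rw [Fintype.card_eq_sum_ones, ← sum_add_distrib]
  exact sum_congr rfl fun i _ => Nat.sub_add_cancel (hα i)

end HermiteGenocchi

open HermiteGenocchi

theorem stmt6_general (n : ℕ) (t : Fin (n + 1) → ℝ) (ht : ∀ j, 0 < t j)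
    (htinj : Function.Injective t)
    (α : Fin (n + 1) → ℕ) (hα : ∀ j, 1 ≤ α j) (p : ℝ) :
    ((∀ j : ℕ, 1 ≤ j → j ≤ (∑ i, α i) - 1 → p ≠ (j : ℝ)) →
      simplexIntegral n (fun s =>
          (∏ j, s j ^ (α j - 1)) * (∑ j, s j * t j) ^ (-p)) =
        (∏ j ∈ Finset.Icc 1 ((∑ i, α i) - 1), ((j : ℝ) - p))⁻¹ *
          pdMulti (fun j => α j - 1)
            (fun y => divDiff (fun u => u ^ (((∑ i, α i : ℕ) : ℝ) - 1 - p)) y) t)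
    ∧
    (2 ≤ ∑ i, α i → p = ((∑ i, α i : ℕ) : ℝ) - 1 →
      simplexIntegral n (fun s =>
          (∏ j, s j ^ (α j - 1)) * (∑ j, s j * t j) ^ (-p)) =
        ((-1 : ℝ) ^ (∑ i, α i) / Real.Gamma p) *
          pdMulti (fun j => α j - 1) (fun y => divDiff Real.log y) t) := by
  set N := ∑ i, α i
  have hsum : ∑ i, (α i - 1) + (n + 1) = N := by
    simpa using sum_tsub_one_add_card α hα
  have hdeg : n + ∑ i, (α i - 1) = N - 1 := by omega
  have hmoment : ∀ f : ℝ → ℝ, (∀ k u, 0 < u → DifferentiableAt ℝ (deriv^[k] f) u) →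
      pdMulti (fun j => α j - 1) (divDiff f) t =
        simplexMoment (fun j => α j - 1) (deriv^[N - 1] f) t := fun f hf => by
    rw [pdMulti_divDiff hf _ ⟨ht, htinj⟩, hdeg]
  have hLHS : simplexIntegral n (fun s => (∏ j, s j ^ (α j - 1)) * (∑ j, s j * t j) ^ (-p)) =
      simplexMoment (fun j => α j - 1) (fun u => u ^ (-p)) t := rfl
  refine ⟨fun hpN => ?_, fun hN hpN => ?_⟩
  · have hexp : (N : ℝ) - 1 - p = ((N - 1 : ℕ) : ℝ) - p := by
      rw [Nat.cast_sub (by omega)]; push_cast; ring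
    have hne : ∏ j ∈ Finset.Icc 1 (N - 1), ((j : ℝ) - p) ≠ 0 :=
      prod_ne_zero_iff.2 fun j hj => sub_ne_zero.2 (hpN j (mem_Icc.1 hj).1 (mem_Icc.1 hj).2).symm
    rw [hLHS, hmoment _ (differentiableAt_iterate_deriv_rpow_const _), hexp,
      iterate_deriv_rpow_natCast_sub, simplexMoment_const_mul, inv_mul_cancel_left₀ hne]
  · obtain ⟨m, hm⟩ : ∃ m, N = m + 2 := ⟨N - 2, by omega⟩
    have hpm : p = m + 1 := by rw [hpN, hm]; push_cast; ring
    rw [hLHS, hmoment _ differentiableAt_iterate_deriv_log, hm, show m + 2 - 1 = m + 1 by rfl,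
      iterate_deriv_log_succ, simplexMoment_const_mul, hpm, Real.Gamma_nat_eq_factorial]
    field_simp
    rw [mul_assoc, ← pow_add, Even.neg_one_pow ⟨m + 1, by ring⟩, mul_one]

theorem stmt6 (n : ℕ) (t : Fin (n + 1) → ℝ) (ht : ∀ j, 0 < t j)
    (htinj : Function.Injective t)
    (α : Fin (n + 1) → ℕ) (hα : ∀ j, 1 ≤ α j) (p : ℝ) (hp : 0 < p) :
    ((∀ j : ℕ, 1 ≤ j → j ≤ (∑ i, α i) - 1 → p ≠ (j : ℝ)) →
      simplexIntegral n (fun s =>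
          (∏ j, s j ^ (α j - 1)) * (∑ j, s j * t j) ^ (-p)) =
        (∏ j ∈ Finset.Icc 1 ((∑ i, α i) - 1), ((j : ℝ) - p))⁻¹ *
          pdMulti (fun j => α j - 1)
            (fun y => divDiff (fun u => u ^ (((∑ i, α i : ℕ) : ℝ) - 1 - p)) y) t)
    ∧
    (2 ≤ ∑ i, α i → p = ((∑ i, α i : ℕ) : ℝ) - 1 →
      simplexIntegral n (fun s =>
          (∏ j, s j ^ (α j - 1)) * (∑ j, s j * t j) ^ (-p)) =
        ((-1 : ℝ) ^ (∑ i, α i) / Real.Gamma p) *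
          pdMulti (fun j => α j - 1) (fun y => divDiff Real.log y) t) :=
  stmt6_general n t ht htinj α hα p
end

section
/- Let a, b, c, d be positive real numbers with ad ≠ bc. Then ∫_0^1 s ds / ((s·a + (1−s)·b)²(s·c + (1−s)·d)) = ( b·c + a·d·( ln((a·d)/(b·c)) − 1 ) ) / ( a · (b·c − a·d)² ). -/
/-!
With `P s = s a + (1 - s) b`, `Q s = s c + (1 - s) d` and `W = b c - a d`, the integrand splits into
partial fractions as `d (P'/P - Q'/Q) / W² + b / (W P²)`. Since `(s / P)' = b / P²`, an antiderivative
is `d (log P - log Q) / W² + s / (P W)`, and `P`, `Q` stay positive on `[0, 1]`, so the fundamental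
theorem of calculus applies; evaluating at the endpoints gives the closed form.
-/

open MeasureTheory intervalIntegral

lemma mul_add_one_sub_mul_pos {s a b : ℝ} (hs : s ∈ Set.Icc (0 : ℝ) 1) (ha : 0 < a)
    (hb : 0 < b) : 0 < s * a + (1 - s) * b :=
  convex_Ioi (0 : ℝ) ha hb hs.1 (sub_nonneg.2 hs.2) (add_sub_cancel _ _)

lemma hasDerivAt_mul_add_one_sub_mul (a b s : ℝ) :
    HasDerivAt (fun s : ℝ => s * a + (1 - s) * b) (a - b) s :=
  (((hasDerivAt_id' s).mul_const a).add (((hasDerivAt_id' s).const_sub 1).mul_const b)).congr_deriv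
    (by ring)

lemma hasDerivAt_div_mul_add_one_sub_mul {a b s : ℝ} (hP : s * a + (1 - s) * b ≠ 0) :
    HasDerivAt (fun s : ℝ => s / (s * a + (1 - s) * b)) (b / (s * a + (1 - s) * b) ^ 2) s :=
  ((hasDerivAt_id' s).div (hasDerivAt_mul_add_one_sub_mul a b s) hP).congr_deriv (by congr 1; ring)

section

variable (a b c d : ℝ)

lemma div_sq_mul_eq_partial_fractions {s : ℝ} (hP : s * a + (1 - s) * b ≠ 0)
    (hQ : s * c + (1 - s) * d ≠ 0) (hW : b * c - a * d ≠ 0) :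
    s / ((s * a + (1 - s) * b) ^ 2 * (s * c + (1 - s) * d)) =
      d * ((a - b) / (s * a + (1 - s) * b) - (c - d) / (s * c + (1 - s) * d)) / (b * c - a * d) ^ 2
        + b / (s * a + (1 - s) * b) ^ 2 / (b * c - a * d) := by
  field_simp
  ring

noncomputable def twistedAntideriv (s : ℝ) : ℝ :=
  d * (Real.log (s * a + (1 - s) * b) - Real.log (s * c + (1 - s) * d)) / (b * c - a * d) ^ 2
    + s / (s * a + (1 - s) * b) / (b * c - a * d)

lemma hasDerivAt_twistedAntideriv {s : ℝ} (hP : s * a + (1 - s) * b ≠ 0)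
    (hQ : s * c + (1 - s) * d ≠ 0) (hW : b * c - a * d ≠ 0) :
    HasDerivAt (twistedAntideriv a b c d)
      (s / ((s * a + (1 - s) * b) ^ 2 * (s * c + (1 - s) * d))) s := by
  rw [div_sq_mul_eq_partial_fractions a b c d hP hQ hW]
  have hlog := ((((hasDerivAt_mul_add_one_sub_mul a b s).log hP).sub
    ((hasDerivAt_mul_add_one_sub_mul c d s).log hQ)).const_mul d).div_const ((b * c - a * d) ^ 2)
  exact hlog.add ((hasDerivAt_div_mul_add_one_sub_mul hP).div_const (b * c - a * d))

lemma twistedAntideriv_one_sub_twistedAntideriv_zero (ha : 0 < a) (hb : 0 < b) (hc : 0 < c) (hd : 0 < d) :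
    twistedAntideriv a b c d 1 - twistedAntideriv a b c d 0 =
      (b * c + a * d * (Real.log ((a * d) / (b * c)) - 1)) / (a * (b * c - a * d) ^ 2) := by
  have h1 : twistedAntideriv a b c d 1 =
      d * (Real.log a - Real.log c) / (b * c - a * d) ^ 2 + 1 / a / (b * c - a * d) := by
    simp [twistedAntideriv]
  have h0 : twistedAntideriv a b c d 0 = d * (Real.log b - Real.log d) / (b * c - a * d) ^ 2 := by
    simp [twistedAntideriv]
  rw [h1, h0, Real.log_div (by positivity) (by positivity), Real.log_mul ha.ne' hd.ne',
    Real.log_mul hb.ne' hc.ne']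
  field_simp
  ring

end

theorem stmt8 (a b c d : ℝ) (ha : 0 < a) (hb : 0 < b) (hc : 0 < c) (hd : 0 < d)
    (h : a * d ≠ b * c) :
    ∫ s in (0:ℝ)..1,
        s / ((s * a + (1 - s) * b) ^ 2 * (s * c + (1 - s) * d)) =
      (b * c + a * d * (Real.log ((a * d) / (b * c)) - 1)) /
        (a * (b * c - a * d) ^ 2) := by
  have hW : b * c - a * d ≠ 0 := sub_ne_zero.mpr h.symm
  have hI : Set.uIcc (0 : ℝ) 1 = Set.Icc 0 1 := Set.uIcc_of_le zero_le_one
  have hP (s : ℝ) (hs : s ∈ Set.uIcc (0 : ℝ) 1) : s * a + (1 - s) * b ≠ 0 :=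
    (mul_add_one_sub_mul_pos (hI ▸ hs) ha hb).ne'
  have hQ (s : ℝ) (hs : s ∈ Set.uIcc (0 : ℝ) 1) : s * c + (1 - s) * d ≠ 0 :=
    (mul_add_one_sub_mul_pos (hI ▸ hs) hc hd).ne'
  have hint : IntervalIntegrable
      (fun s : ℝ => s / ((s * a + (1 - s) * b) ^ 2 * (s * c + (1 - s) * d))) volume 0 1 :=
    ContinuousOn.intervalIntegrable <| continuousOn_id.div (by fun_prop)
      fun s hs => mul_ne_zero (pow_ne_zero 2 (hP s hs)) (hQ s hs)
  rw [integral_eq_sub_of_hasDerivAt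
      (fun s hs => hasDerivAt_twistedAntideriv a b c d (hP s hs) (hQ s hs) hW) hint]
  exact twistedAntideriv_one_sub_twistedAntideriv_zero a b c d ha hb hc hd
end

section
/- Let P_0, P_1 be 2×2 real symmetric positive definite matrices with det(P_0 − P_1) = 0. Then ∫_0^1 (det(s P_0 + (1−s) P_1))^{−1/2} ds = 2 / ( √(det P_0) + √(det P_1) ). -/
/-! For `2 × 2` matrices `det (s • A + t • B) = s² det A + t² det B + s t · c` with
`c = det A + det B - det (A - B)`, so when `det (P0 - P1) = 0` the determinant along the segment
is the affine function `s det P0 + (1 - s) det P1`. Then `2 √(s a + (1 - s) b) / (a - b)` is an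
antiderivative of the integrand, and `(√a - √b) / (a - b) = 1 / (√a + √b)`. -/

open MeasureTheory

theorem Matrix.det_fin_two_smul_add_smul_of_det_sub_eq_zero {R : Type*} [CommRing R]
    {A B : Matrix (Fin 2) (Fin 2) R} (h : (A - B).det = 0) (s t : R) :
    (s • A + t • B).det = s * (s + t) * A.det + t * (s + t) * B.det := by
  simp only [Matrix.det_fin_two, Matrix.sub_apply] at h
  simp only [Matrix.det_fin_two, Matrix.add_apply, Matrix.smul_apply, smul_eq_mul]
  linear_combination (-(s * t)) * h

lemma affine_pos_of_mem_unitInterval {a b s : ℝ} (ha : 0 < a) (hb : 0 < b)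
    (hs : s ∈ Set.Icc (0 : ℝ) 1) : 0 < s * a + (1 - s) * b := by
  nlinarith [mul_nonneg hs.1 ha.le, mul_nonneg (sub_nonneg.mpr hs.2) hb.le, mul_pos ha hb]

lemma hasDerivAt_sqrt_affine_div {a b s : ℝ} (hab : a ≠ b) (hpos : 0 < s * a + (1 - s) * b) :
    HasDerivAt (fun t => 2 * Real.sqrt (t * a + (1 - t) * b) / (a - b))
      (Real.sqrt (s * a + (1 - s) * b))⁻¹ s := by
  have hlin : HasDerivAt (fun t : ℝ => t * a + (1 - t) * b) (a - b) s :=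
    (((hasDerivAt_id s).mul_const a).add
      (((hasDerivAt_const s (1 : ℝ)).sub (hasDerivAt_id s)).mul_const b)).congr_deriv (by ring)
  refine (((hlin.sqrt hpos.ne').const_mul 2).div_const (a - b)).congr_deriv ?_
  have hsqrt : Real.sqrt (s * a + (1 - s) * b) ≠ 0 := (Real.sqrt_pos.mpr hpos).ne'
  have hab' : a - b ≠ 0 := sub_ne_zero.mpr hab
  field_simp

theorem integral_inv_sqrt_affine {a b : ℝ} (ha : 0 < a) (hb : 0 < b) :
    ∫ s in (0 : ℝ)..1, (Real.sqrt (s * a + (1 - s) * b))⁻¹ =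
      2 / (Real.sqrt a + Real.sqrt b) := by
  rcases eq_or_ne a b with rfl | hab
  · simp only [show ∀ s : ℝ, s * a + (1 - s) * a = a from fun s => by ring,
      intervalIntegral.integral_const, sub_zero, one_smul]
    field_simp
    ring
  have hpos : ∀ s ∈ Set.uIcc (0 : ℝ) 1, 0 < s * a + (1 - s) * b := fun s hs =>
    affine_pos_of_mem_unitInterval ha hb (by rwa [Set.uIcc_of_le zero_le_one] at hs)
  have hcont : ContinuousOn (fun s : ℝ => (Real.sqrt (s * a + (1 - s) * b))⁻¹)
      (Set.uIcc (0 : ℝ) 1) :=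
    ContinuousOn.inv₀ (by fun_prop) fun s hs => (Real.sqrt_pos.mpr (hpos s hs)).ne'
  rw [intervalIntegral.integral_eq_sub_of_hasDerivAt
    (fun s hs => hasDerivAt_sqrt_affine_div hab (hpos s hs)) hcont.intervalIntegrable]
  have hdiff : a - b = (Real.sqrt a - Real.sqrt b) * (Real.sqrt a + Real.sqrt b) := by
    linear_combination Real.sq_sqrt hb.le - Real.sq_sqrt ha.le
  have hne : Real.sqrt a - Real.sqrt b ≠ 0 :=
    sub_ne_zero.mpr fun h => hab ((Real.sqrt_inj ha.le hb.le).mp h)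
  simp only [one_mul, sub_self, zero_mul, add_zero, sub_zero, zero_add]
  rw [hdiff]
  field_simp

theorem stmt10_general (P0 P1 : Matrix (Fin 2) (Fin 2) ℝ)
    (h0p : P0.PosDef) (h1p : P1.PosDef)
    (h : (P0 - P1).det = 0) :
    ∫ s in (0:ℝ)..1, (Real.sqrt ((s • P0 + (1 - s) • P1).det))⁻¹ =
      2 / (Real.sqrt P0.det + Real.sqrt P1.det) := by
  have hdet : ∀ s : ℝ, (s • P0 + (1 - s) • P1).det = s * P0.det + (1 - s) * P1.det := by
    intro s
    simpa using Matrix.det_fin_two_smul_add_smul_of_det_sub_eq_zero h s (1 - s)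
  simp only [hdet]
  exact integral_inv_sqrt_affine h0p.det_pos h1p.det_pos

theorem stmt10 (P0 P1 : Matrix (Fin 2) (Fin 2) ℝ)
    (h0s : P0.IsSymm) (h0p : P0.PosDef) (h1s : P1.IsSymm) (h1p : P1.PosDef)
    (h : (P0 - P1).det = 0) :
    ∫ s in (0:ℝ)..1, (Real.sqrt ((s • P0 + (1 - s) • P1).det))⁻¹ =
      2 / (Real.sqrt P0.det + Real.sqrt P1.det) :=
  stmt10_general P0 P1 h0p h1p h
end

section
/- For real d ∉ {0, 2} and distinct positive reals x, y, define K_d^t(x,y) = (4 x^{2−3d/4} y^{2−3d/4} / (d(d−2)(x−y)³)) · ((d−1) x^{d/2} y^{d/2−1} − (d−1) x^{d/2−1} y^{d/2} − x^{d−1} + y^{d−1}). Then for every fixed pair of distinct positive reals x, y, the limit of K_d^t(x,y) as the real parameter d tends to 2 (through values d ≠ 2) exists and equals K_2^t(x,y) = −(√x √y /(x−y)³) · ( (x+y) ln(x/y) + 2(y−x) ). -/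
/-!
At `d = 2` the bracketed numerator of `K_d^t` vanishes, and so does the factor `d - 2` of the
denominator. The limit is therefore the rest of the prefactor at `d = 2`, namely
`2 √x √y / (x - y)³`, times the derivative of the numerator in `d` at `d = 2`, which is
`x - y - (x + y) / 2 · log (x / y)`.
-/

open Real Filter Topology

theorem tendsto_div_sub_mul_of_hasDerivAt {f g : ℝ → ℝ} {a g' : ℝ} (hf : ContinuousAt f a)
    (hg : HasDerivAt g g' a) (hga : g a = 0) :
    Tendsto (fun t => f t / (t - a) * g t) (𝓝[≠] a) (𝓝 (f a * g')) := by
  refine ((hf.tendsto.mono_left nhdsWithin_le_nhds).mul (hasDerivAt_iff_tendsto_slope.mp hg)).congr'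
    (eventually_nhdsWithin_of_forall fun t _ => ?_)
  rw [slope_def_field, hga, sub_zero]
  ring

noncomputable def ktNumerator (x y d : ℝ) : ℝ :=
  (d - 1) * x ^ (d / 2) * y ^ (d / 2 - 1) - (d - 1) * x ^ (d / 2 - 1) * y ^ (d / 2) -
    x ^ (d - 1) + y ^ (d - 1)

theorem ktNumerator_two (x y : ℝ) : ktNumerator x y 2 = 0 := by
  norm_num [ktNumerator]

theorem hasDerivAt_ktNumerator_two {x y : ℝ} (hx : 0 < x) (hy : 0 < y) :
    HasDerivAt (ktNumerator x y) (x - y - (x + y) / 2 * log (x / y)) 2 := by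
  have hid : HasDerivAt (fun d : ℝ => d) 1 2 := hasDerivAt_id 2
  have hhalf : HasDerivAt (fun d : ℝ => d / 2) (1 / 2) 2 := hid.div_const 2
  have hm := hid.sub_const 1
  have h := (((hm.fun_mul (hhalf.const_rpow hx)).fun_mul ((hhalf.sub_const 1).const_rpow hy)).fun_sub
    ((hm.fun_mul ((hhalf.sub_const 1).const_rpow hx)).fun_mul (hhalf.const_rpow hy))).fun_sub
    (hm.const_rpow hx) |>.fun_add (hm.const_rpow hy)
  refine h.congr_deriv ?_
  norm_num
  rw [log_div hx.ne' hy.ne']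
  ring

theorem stmt12 (x y : ℝ) (hx : 0 < x) (hy : 0 < y) (hxy : x ≠ y) :
    Filter.Tendsto
      (fun d : ℝ =>
        (4 * x ^ (2 - 3 * d / 4) * y ^ (2 - 3 * d / 4) /
            (d * (d - 2) * (x - y) ^ 3)) *
          ((d - 1) * x ^ (d / 2) * y ^ (d / 2 - 1) -
            (d - 1) * x ^ (d / 2 - 1) * y ^ (d / 2) -
            x ^ (d - 1) + y ^ (d - 1)))
      (nhdsWithin (2 : ℝ) {(2 : ℝ)}ᶜ)
      (nhds (-(Real.sqrt x * Real.sqrt y / (x - y) ^ 3) *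
        ((x + y) * Real.log (x / y) + 2 * (y - x)))) := by
  have hpre : ContinuousAt
      (fun d : ℝ => 4 * x ^ (2 - 3 * d / 4) * y ^ (2 - 3 * d / 4) / (d * (x - y) ^ 3)) 2 := by
    fun_prop (disch := positivity)
  have hlim := tendsto_div_sub_mul_of_hasDerivAt hpre (hasDerivAt_ktNumerator_two hx hy)
    (ktNumerator_two x y)
  convert hlim using 2 with d
  · rw [ktNumerator, div_div, mul_right_comm d ((x - y) ^ 3)]
  · norm_num [sqrt_eq_rpow]
    field_simp
    ring
end

section
/- Let d ≥ 1 be an integer with d ≠ 2, and define, for distinct reals t_0, t_1, K_d(t_0,t_1) = K_d^t(e^{−2t_0}, e^{−2t_1}) · (e^{−2t_0} − e^{−2t_1})/(t_0 − t_1), where K_d^t(x,y) = (4 x^{2−3d/4} y^{2−3d/4} / (d(d−2)(x−y)³)) · ((d−1) x^{d/2} y^{d/2−1} − (d−1) x^{d/2−1} y^{d/2} − x^{d−1} + y^{d−1}). Then for every real t, the limit of K_d(t_0,t_1) as (t_0,t_1) → (t,t) (through pairs with t_0 ≠ t_1) exists and equals ((d−1)/3) · e^{(d−2)t}. -/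
/-!
Put `s = t₀ + t₁` and `u = t₀ - t₁`, so that `e^{-2t₀} = e^{-s} e^{-u}` and `e^{-2t₁} = e^{-s} e^{u}`.
Since `K_d^t` is homogeneous of degree `-d/2`, `K_d(t₀, t₁)` equals
`2 / (d (d - 2)) · e^{(d/2 - 1) s} · (sinh ((d - 1) u) - (d - 1) sinh u) / (u sinh² u)`.
The odd function `sinh (m u) - m sinh u` vanishes to second order at `0` with third derivative
`m³ - m`, so the last factor tends to `((d - 1)³ - (d - 1)) / 6 = d (d - 1) (d - 2) / 6`,
while the prefactor tends to `2 e^{(d - 2) t} / (d (d - 2))`.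
-/

open Real Filter Topology

theorem tendsto_div_self_of_hasDerivAt_zero {f : ℝ → ℝ} {c : ℝ} (hf : HasDerivAt f c 0)
    (h0 : f 0 = 0) : Tendsto (fun u => f u / u) (𝓝[≠] 0) (𝓝 c) := by
  simpa [h0, div_eq_inv_mul] using hf.tendsto_slope_zero

theorem tendsto_nhdsNE_zero_of_continuousAt {f : ℝ → ℝ} (hf : ContinuousAt f 0) (h0 : f 0 = 0) :
    Tendsto f (𝓝[≠] 0) (𝓝 0) := by
  simpa [h0] using hf.tendsto.mono_left nhdsWithin_le_nhds

theorem tendsto_div_pow_three_of_hasDerivAt {f f₁ f₂ : ℝ → ℝ} {c : ℝ}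
    (hf : ∀ x, HasDerivAt f (f₁ x) x) (hf₁ : ∀ x, HasDerivAt f₁ (f₂ x) x)
    (hf₂ : HasDerivAt f₂ c 0) (h0 : f 0 = 0) (h₁0 : f₁ 0 = 0) (h₂0 : f₂ 0 = 0) :
    Tendsto (fun u => f u / u ^ 3) (𝓝[≠] 0) (𝓝 (c / 6)) := by
  have hne : ∀ᶠ u in 𝓝[≠] (0 : ℝ), u ≠ 0 := self_mem_nhdsWithin
  have h₂ : Tendsto (fun u => f₂ u / (6 * u)) (𝓝[≠] 0) (𝓝 (c / 6)) := by
    simpa only [div_div, mul_comm] using (tendsto_div_self_of_hasDerivAt_zero hf₂ h₂0).div_const 6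
  have h₁ : Tendsto (fun u => f₁ u / (3 * u ^ 2)) (𝓝[≠] 0) (𝓝 (c / 6)) := by
    refine HasDerivAt.lhopital_zero_nhdsNE (.of_forall hf₁)
      (.of_forall fun u => ?_) ?_ (tendsto_nhdsNE_zero_of_continuousAt (hf₁ 0).continuousAt h₁0) ?_ h₂
    · exact ((hasDerivAt_pow 2 u).const_mul 3).congr_deriv (by ring)
    · filter_upwards [hne] with u hu using by positivity
    · exact tendsto_nhdsNE_zero_of_continuousAt (by fun_prop) (by simp)
  refine HasDerivAt.lhopital_zero_nhdsNE (.of_forall hf) (.of_forall fun u => ?_) ?_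
    (tendsto_nhdsNE_zero_of_continuousAt (hf 0).continuousAt h0) ?_ h₁
  · simpa using hasDerivAt_pow 3 u
  · filter_upwards [hne] with u hu using by positivity
  · exact tendsto_nhdsNE_zero_of_continuousAt (by fun_prop) (by simp)

theorem tendsto_sinh_mul_sub_mul_sinh_div_pow_three (m : ℝ) :
    Tendsto (fun u => (sinh (m * u) - m * sinh u) / u ^ 3) (𝓝[≠] 0) (𝓝 ((m ^ 3 - m) / 6)) := by
  have hmul (u : ℝ) : HasDerivAt (fun u => m * u) m u := by
    simpa using (hasDerivAt_id u).const_mul m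
  refine tendsto_div_pow_three_of_hasDerivAt (f₁ := fun u => m * cosh (m * u) - m * cosh u)
    (f₂ := fun u => m ^ 2 * sinh (m * u) - m * sinh u) (fun u => ?_) (fun u => ?_) ?_
    (by simp) (by simp) (by simp)
  · exact ((hmul u).sinh.sub ((hasDerivAt_sinh u).const_mul m)).congr_deriv (by ring)
  · exact (((hmul u).cosh.const_mul m).sub ((hasDerivAt_cosh u).const_mul m)).congr_deriv
      (by ring)
  · exact (((hmul 0).sinh.const_mul (m ^ 2)).sub ((hasDerivAt_sinh 0).const_mul m)).congr_deriv
      (by simp; ring)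

theorem tendsto_div_sinh_self : Tendsto (fun u => u / sinh u) (𝓝[≠] 0) (𝓝 1) := by
  simpa using (tendsto_div_self_of_hasDerivAt_zero (hasDerivAt_sinh 0) sinh_zero).inv₀ (by simp)

theorem tendsto_sinh_mul_sub_mul_sinh_div (m : ℝ) :
    Tendsto (fun u => (sinh (m * u) - m * sinh u) / (u * sinh u ^ 2)) (𝓝[≠] 0)
      (𝓝 ((m ^ 3 - m) / 6)) := by
  have h := (tendsto_sinh_mul_sub_mul_sinh_div_pow_three m).mul (tendsto_div_sinh_self.pow 2)
  rw [one_pow, mul_one] at h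
  refine h.congr' ?_
  filter_upwards [self_mem_nhdsWithin] with u (hu : u ≠ 0)
  have : sinh u ≠ 0 := sinh_ne_zero.mpr hu
  field_simp

theorem exp_neg_sub_exp (u : ℝ) : exp (-u) - exp u = -2 * sinh u := by
  rw [sinh_eq]; ring

-- `curvatureKt d` is the paper's `K_d^t`, and `curvatureK d` its `K_d` for `f(t) = e^{-2t}`.
noncomputable def curvatureKt (d x y : ℝ) : ℝ :=
  4 * x ^ (2 - 3 * d / 4) * y ^ (2 - 3 * d / 4) / (d * (d - 2) * (x - y) ^ 3) *
    ((d - 1) * x ^ (d / 2) * y ^ (d / 2 - 1) - (d - 1) * x ^ (d / 2 - 1) * y ^ (d / 2) -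
      x ^ (d - 1) + y ^ (d - 1))

noncomputable def curvatureK (d t₀ t₁ : ℝ) : ℝ :=
  curvatureKt d (exp (-2 * t₀)) (exp (-2 * t₁)) *
    ((exp (-2 * t₀) - exp (-2 * t₁)) / (t₀ - t₁))

theorem curvatureKt_mul_mul (d : ℝ) {c x y : ℝ} (hc : 0 < c) (hx : 0 ≤ x) (hy : 0 ≤ y) :
    curvatureKt d (c * x) (c * y) = c ^ (-d / 2) * curvatureKt d x y := by
  have hd : c ^ (d / 2) * c ^ (d / 2 - 1) = c ^ (d - 1) := by
    rw [← rpow_add hc]; ring_nf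
  have hd' : c ^ (d / 2 - 1) * c ^ (d / 2) = c ^ (d - 1) := by rw [mul_comm, hd]
  have hdeg : c ^ (2 - 3 * d / 4) * c ^ (2 - 3 * d / 4) * c ^ (d - 1) = c ^ (-d / 2) * c ^ 3 := by
    rw [← rpow_add hc, ← rpow_add hc, ← rpow_natCast, ← rpow_add hc]; ring_nf
  simp only [curvatureKt, mul_rpow hc.le hx, mul_rpow hc.le hy, ← mul_sub, mul_pow]
  have hc3 : c ^ 3 ≠ 0 := by positivity
  rw [div_mul_eq_mul_div, div_mul_eq_mul_div, mul_div_assoc']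
  conv_rhs => rw [← mul_div_mul_left _ _ hc3]
  congr 1
  · linear_combination 4 * c ^ (2 - 3 * d / 4) * c ^ (2 - 3 * d / 4) * x ^ (2 - 3 * d / 4) *
      y ^ (2 - 3 * d / 4) * ((d - 1) * x ^ (d / 2) * y ^ (d / 2 - 1) * hd -
        (d - 1) * x ^ (d / 2 - 1) * y ^ (d / 2) * hd') +
      4 * x ^ (2 - 3 * d / 4) * y ^ (2 - 3 * d / 4) * ((d - 1) * x ^ (d / 2) * y ^ (d / 2 - 1) -
        (d - 1) * x ^ (d / 2 - 1) * y ^ (d / 2) - x ^ (d - 1) + y ^ (d - 1)) * hdeg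
  · ring

theorem curvatureKt_exp_neg_exp (d u : ℝ) :
    curvatureKt d (exp (-u)) (exp u) =
      -(sinh ((d - 1) * u) - (d - 1) * sinh u) / (d * (d - 2) * sinh u ^ 3) := by
  have hsym : exp (-u) ^ (2 - 3 * d / 4) * exp u ^ (2 - 3 * d / 4) = 1 := by
    rw [← exp_mul, ← exp_mul, ← exp_add]; simp
  have hmix : exp (-u) ^ (d / 2) * exp u ^ (d / 2 - 1) = exp (-u) := by
    rw [← exp_mul, ← exp_mul, ← exp_add]; ring_nf
  have hmix' : exp (-u) ^ (d / 2 - 1) * exp u ^ (d / 2) = exp u := by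
    rw [← exp_mul, ← exp_mul, ← exp_add]; ring_nf
  have hodd : (d - 1) * exp (-u) - (d - 1) * exp u - exp (-u) ^ (d - 1) + exp u ^ (d - 1) =
      2 * (sinh ((d - 1) * u) - (d - 1) * sinh u) := by
    rw [← exp_mul, ← exp_mul, sinh_eq, sinh_eq]; ring_nf
  rw [curvatureKt, mul_assoc 4, hsym, mul_assoc (d - 1), hmix, mul_assoc (d - 1), hmix', hodd,
    exp_neg_sub_exp]
  rcases eq_or_ne (sinh u) 0 with hs | hs
  · simp [hs]
  field_simp
  ring

theorem curvatureK_eq (d : ℝ) {t₀ t₁ : ℝ} (h : t₀ ≠ t₁) :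
    curvatureK d t₀ t₁ = 2 / (d * (d - 2)) * exp ((d / 2 - 1) * (t₀ + t₁)) *
      ((sinh ((d - 1) * (t₀ - t₁)) - (d - 1) * sinh (t₀ - t₁)) /
        ((t₀ - t₁) * sinh (t₀ - t₁) ^ 2)) := by
  have hu : t₀ - t₁ ≠ 0 := sub_ne_zero.mpr h
  have hs : sinh (t₀ - t₁) ≠ 0 := sinh_ne_zero.mpr hu
  have hsplit (t : ℝ) (u : ℝ) (ht : -2 * t = -(t₀ + t₁) + u) :
      exp (-2 * t) = exp (-(t₀ + t₁)) * exp u := by rw [ht, exp_add]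
  have hscale : exp (-(t₀ + t₁)) ^ (-d / 2) * exp (-(t₀ + t₁)) = exp ((d / 2 - 1) * (t₀ + t₁)) := by
    rw [← exp_mul, ← exp_add]; ring_nf
  rw [curvatureK, hsplit t₀ (-(t₀ - t₁)) (by ring), hsplit t₁ (t₀ - t₁) (by ring), ← mul_sub,
    curvatureKt_mul_mul d (exp_pos _) (exp_pos _).le (exp_pos _).le, curvatureKt_exp_neg_exp,
    exp_neg_sub_exp, ← hscale]
  field_simp

theorem tendsto_curvatureK_diagonal {d : ℝ} (hd₀ : d ≠ 0) (hd₂ : d ≠ 2) (t : ℝ) :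
    Tendsto (fun q : ℝ × ℝ => curvatureK d q.1 q.2) (𝓝[{q | q.1 ≠ q.2}] (t, t))
      (𝓝 ((d - 1) / 3 * exp ((d - 2) * t))) := by
  have hsub : Tendsto (fun q : ℝ × ℝ => q.1 - q.2) (𝓝[{q | q.1 ≠ q.2}] (t, t)) (𝓝[≠] 0) := by
    refine tendsto_nhdsWithin_iff.mpr ⟨?_, eventually_nhdsWithin_of_forall fun q hq => ?_⟩
    · simpa using ((by fun_prop : Continuous fun q : ℝ × ℝ => q.1 - q.2).tendsto (t, t)).mono_left
        nhdsWithin_le_nhds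
    · exact sub_ne_zero.mpr hq
  have hprefactor : Tendsto (fun q : ℝ × ℝ => 2 / (d * (d - 2)) * exp ((d / 2 - 1) * (q.1 + q.2)))
      (𝓝[{q | q.1 ≠ q.2}] (t, t)) (𝓝 (2 / (d * (d - 2)) * exp ((d / 2 - 1) * (t + t)))) :=
    ((by fun_prop : Continuous fun q : ℝ × ℝ => 2 / (d * (d - 2)) *
      exp ((d / 2 - 1) * (q.1 + q.2))).tendsto (t, t)).mono_left nhdsWithin_le_nhds
  have hlim := hprefactor.mul ((tendsto_sinh_mul_sub_mul_sinh_div (d - 1)).comp hsub)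
  have hval : 2 / (d * (d - 2)) * exp ((d / 2 - 1) * (t + t)) * (((d - 1) ^ 3 - (d - 1)) / 6) =
      (d - 1) / 3 * exp ((d - 2) * t) := by
    rw [show (d / 2 - 1) * (t + t) = (d - 2) * t by ring]
    field_simp [sub_ne_zero.mpr hd₂]
    ring
  rw [← hval]
  exact hlim.congr' (eventually_nhdsWithin_of_forall fun q hq => (curvatureK_eq d hq).symm)

theorem stmt13 (d : ℕ) (hd1 : 1 ≤ d) (hd2 : d ≠ 2) (t : ℝ) :
    Filter.Tendsto
      (fun q : ℝ × ℝ =>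
        ((4 * Real.exp (-2 * q.1) ^ (2 - 3 * (d : ℝ) / 4) *
              Real.exp (-2 * q.2) ^ (2 - 3 * (d : ℝ) / 4) /
            ((d : ℝ) * ((d : ℝ) - 2) *
              (Real.exp (-2 * q.1) - Real.exp (-2 * q.2)) ^ 3)) *
          (((d : ℝ) - 1) * Real.exp (-2 * q.1) ^ ((d : ℝ) / 2) *
              Real.exp (-2 * q.2) ^ ((d : ℝ) / 2 - 1) -
            ((d : ℝ) - 1) * Real.exp (-2 * q.1) ^ ((d : ℝ) / 2 - 1) *
              Real.exp (-2 * q.2) ^ ((d : ℝ) / 2) -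
            Real.exp (-2 * q.1) ^ ((d : ℝ) - 1) +
            Real.exp (-2 * q.2) ^ ((d : ℝ) - 1))) *
          ((Real.exp (-2 * q.1) - Real.exp (-2 * q.2)) / (q.1 - q.2)))
      (nhdsWithin (t, t) {q : ℝ × ℝ | q.1 ≠ q.2})
      (nhds (((d : ℝ) - 1) / 3 * Real.exp (((d : ℝ) - 2) * t))) :=
  tendsto_curvatureK_diagonal (Nat.cast_ne_zero.mpr (by omega)) (by exact_mod_cast hd2) t
end
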